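/- arXiv:0912.0308 — 5 statements merged into one kernel-verified Lean document; each statement's English description precedes it below -/
import Mathlib

section
/- Suppose that G is a finite group and A ⊆ G is nonempty with ‖1_A‖_{A(G)} < 1 + 1/750. Then there is a subgroup H ≤ G and an element x ∈ G such that A = Hx. -/
open scoped BigOperators Pointwise

noncomputable section

variable {G : Type*}

/-- Convolution of complex-valued functions on a finite group `G`,
normalized by the Haar probability measure: `f∗g(x) = (1/|G|)·∑ y, f y * g (y⁻¹x)`. -/
def convC [Group G] [Fintype G] (f g : G → ℂ) : G → ℂ :=
  fun x => (Fintype.card G : ℂ)⁻¹ * ∑ y : G, f y * g (y⁻¹ * x)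

/-- The inner product on `L²(μ_G)`: `⟨f,g⟩ = (1/|G|)·∑ x, f x * conj (g x)`. -/
def innerG [Group G] [Fintype G] (f g : G → ℂ) : ℂ :=
  (Fintype.card G : ℂ)⁻¹ * ∑ x : G, f x * (starRingEnd ℂ) (g x)

/-- The `L²(μ_G)` norm. -/
def l2normG [Group G] [Fintype G] (f : G → ℂ) : ℝ :=
  Real.sqrt ((Fintype.card G : ℝ)⁻¹ * ∑ x : G, ‖f x‖ ^ 2)

/-- `‖f‖_{PM(G)}`: operator norm of `v ↦ f ∗ v` on `L²(μ_G)`. -/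
def PMnorm [Group G] [Fintype G] (f : G → ℂ) : ℝ :=
  sSup {r : ℝ | ∃ v : G → ℂ, l2normG v ≤ 1 ∧ r = l2normG (convC f v)}

/-- The algebra norm `‖f‖_{A(G)} = sup{|⟨f,g⟩| : ‖g‖_{PM(G)} ≤ 1}`. -/
def Anorm [Group G] [Fintype G] (f : G → ℂ) : ℝ :=
  sSup {r : ℝ | ∃ g : G → ℂ, PMnorm g ≤ 1 ∧ r = ‖innerG f g‖}

/-- Complex-valued indicator function of a set. -/
def indC (A : Set G) : G → ℂ := Set.indicator A (1 : G → ℂ)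

/-- `μ_A = (|G|/|A|)·1_A`, the density of the uniform probability measure on `A`. -/
def muC [Fintype G] (A : Set G) : G → ℂ :=
  fun x => ((Fintype.card G : ℂ) / (Nat.card A : ℂ)) * indC A x

/-- `μ_G(S) = |S|/|G|`. -/
def density [Fintype G] (S : Set G) : ℝ :=
  (Nat.card S : ℝ) / (Fintype.card G : ℝ)

/-- Real-valued convolution, normalized by `|G|`. -/
def convR [Group G] [Fintype G] (f g : G → ℝ) : G → ℝ :=
  fun x => (Fintype.card G : ℝ)⁻¹ * ∑ y : G, f y * g (y⁻¹ * x)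

/-- Real-valued indicator function of a set. -/
def indR (A : Set G) : G → ℝ := Set.indicator A (1 : G → ℝ)

/-- `μ_A = (|G|/|A|)·1_A`, real-valued. -/
def muR [Fintype G] (A : Set G) : G → ℝ :=
  fun x => ((Fintype.card G : ℝ) / (Nat.card A : ℝ)) * indR A x

/-- The symmetry set `Sym_η(A) = {x : 1_A ∗ 1_{A⁻¹}(x) ≥ η·μ_G(A)}`. -/
def symmSet [Group G] [Fintype G] (A : Set G) (η : ℝ) : Set G :=
  {x : G | η * density A ≤ convR (indR A) (indR A⁻¹) x}

/-- `(B, B′)` is an `ε`-closed, `c`-thick, `r`-multiplicative pair: both are symmetric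
neighbourhoods of the identity, `μ_G(B′) ≥ c·μ_G(B)`, and there are symmetric
neighbourhoods of the identity `B⁺, B⁻` with `B′^r·B⁻·B′^r ⊆ B`, `B′^r·B·B′^r ⊆ B⁺`
and `μ_G(B⁺ \ B⁻) ≤ ε·μ_G(B)`. -/
def IsMultPair [Group G] [Fintype G] (B B' : Set G) (r : ℕ) (ε c : ℝ) : Prop :=
  (1 ∈ B ∧ B⁻¹ = B) ∧ (1 ∈ B' ∧ B'⁻¹ = B') ∧
  c * density B ≤ density B' ∧
  ∃ Bp Bm : Set G, (1 ∈ Bp ∧ Bp⁻¹ = Bp) ∧ (1 ∈ Bm ∧ Bm⁻¹ = Bm) ∧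
    B' ^ r * Bm * B' ^ r ⊆ B ∧ B' ^ r * B * B' ^ r ⊆ Bp ∧
    density (Bp \ Bm) ≤ ε * density B

/-!
If `A` is closed under `(a, b, c) ↦ a b⁻¹ c`, then `A x⁻¹` is a subgroup for any `x ∈ A`.
Otherwise pick `a, b, c ∈ A` with `d = a b⁻¹ c ∉ A`. The function `g = δ_a + δ_b + δ_c - δ_d`
(suitably normalised) pairs with `1_A` to give `3`, while convolution with it has operator norm at
most `2√2`: with `u = τ_b v` and `w = τ_c v` one has `τ_a v - τ_d v = τ_{ab⁻¹} (u - w)`, so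
`‖g ∗ v‖ ≤ ‖u + w‖ + ‖u - w‖ ≤ 2√2 ‖v‖` by the parallelogram law. Hence
`‖1_A‖_{A(G)} ≥ 3 / (2√2) > 1 + 1/750`.
-/

lemma norm_add_add_norm_sub_le (𝕜 : Type*) {E : Type*} [RCLike 𝕜] [SeminormedAddCommGroup E]
    [InnerProductSpace 𝕜 E] (x y : E) :
    ‖x + y‖ + ‖x - y‖ ≤ 2 * √(‖x‖ ^ 2 + ‖y‖ ^ 2) := by
  have hpar := parallelogram_law_with_norm 𝕜 x y
  have hsq := Real.sq_sqrt (by positivity : 0 ≤ ‖x‖ ^ 2 + ‖y‖ ^ 2)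
  nlinarith [sq_nonneg (‖x + y‖ - ‖x - y‖), Real.sqrt_nonneg (‖x‖ ^ 2 + ‖y‖ ^ 2),
    norm_nonneg (x + y), norm_nonneg (x - y)]

section

variable [Group G]

lemma exists_eq_image_mul_right_of_mul_inv_mul_mem {A : Set G} (hA : A.Nonempty)
    (hA3 : ∀ a ∈ A, ∀ b ∈ A, ∀ c ∈ A, a * b⁻¹ * c ∈ A) :
    ∃ (H : Subgroup G) (x : G), A = (fun h => h * x) '' (H : Set G) := by
  obtain ⟨x, hx⟩ := hA
  refine ⟨{ carrier := (fun h => h * x⁻¹) '' A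
            one_mem' := ⟨x, hx, mul_inv_cancel x⟩
            mul_mem' := ?_
            inv_mem' := ?_ }, x, ?_⟩
  · rintro _ _ ⟨p, hp, rfl⟩ ⟨q, hq, rfl⟩
    exact ⟨p * x⁻¹ * q, hA3 p hp x hx q hq, by group⟩
  · rintro _ ⟨p, hp, rfl⟩
    exact ⟨x * p⁻¹ * x, hA3 x hx p hp x hx, by group⟩
  · ext t
    simp

variable [Fintype G]

def l2Translate (g : G) : EuclideanSpace ℂ G ≃ₗᵢ[ℂ] EuclideanSpace ℂ G :=
  LinearIsometryEquiv.piLpCongrLeft 2 ℂ ℂ (Equiv.mulLeft g)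

@[simp]
lemma l2Translate_apply (g : G) (v : EuclideanSpace ℂ G) (x : G) :
    l2Translate g v x = v (g⁻¹ * x) := by
  simp [l2Translate, LinearIsometryEquiv.piLpCongrLeft_apply, Equiv.piCongrLeft'_apply]

lemma l2Translate_l2Translate (g h : G) (v : EuclideanSpace ℂ G) :
    l2Translate g (l2Translate h v) = l2Translate (g * h) v := by
  ext x
  simp [mul_assoc]

lemma l2normG_eq_norm_div (v : G → ℂ) :
    l2normG v = ‖(WithLp.toLp 2 v : EuclideanSpace ℂ G)‖ / √(Fintype.card G) := by
  rw [l2normG, EuclideanSpace.norm_eq, Real.sqrt_mul (by positivity), Real.sqrt_inv]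
  simp [div_eq_inv_mul]

lemma l2normG_nonneg (v : G → ℂ) : 0 ≤ l2normG v := Real.sqrt_nonneg _

lemma l2normG_smul (c : ℂ) (v : G → ℂ) : l2normG (c • v) = ‖c‖ * l2normG v := by
  rw [l2normG_eq_norm_div, l2normG_eq_norm_div, WithLp.toLp_smul, norm_smul, mul_div_assoc]

lemma toLp_convC (f v : G → ℂ) :
    (WithLp.toLp 2 (convC f v) : EuclideanSpace ℂ G) =
      (Fintype.card G : ℂ)⁻¹ • ∑ y, f y • l2Translate y (WithLp.toLp 2 v) := by
  ext x
  simp [convC]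

lemma norm_l2Translate_parallelogram_le (a b c : G) (v : EuclideanSpace ℂ G) :
    ‖l2Translate a v + l2Translate b v + l2Translate c v - l2Translate (a * b⁻¹ * c) v‖
      ≤ 2 * √2 * ‖v‖ := by
  set u := l2Translate b v
  set w := l2Translate c v
  have hshift : l2Translate a v - l2Translate (a * b⁻¹ * c) v = l2Translate (a * b⁻¹) (u - w) := by
    simp [u, w, map_sub, l2Translate_l2Translate, mul_assoc]
  calc _ = ‖(u + w) + l2Translate (a * b⁻¹) (u - w)‖ := by rw [← hshift]; congr 1; abel
    _ ≤ ‖u + w‖ + ‖u - w‖ := (norm_add_le _ _).trans_eq (by rw [LinearIsometryEquiv.norm_map])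
    _ ≤ 2 * √(‖u‖ ^ 2 + ‖w‖ ^ 2) := norm_add_add_norm_sub_le ℂ u w
    _ = 2 * √2 * ‖v‖ := by
      rw [LinearIsometryEquiv.norm_map, LinearIsometryEquiv.norm_map, ← two_mul,
        Real.sqrt_mul zero_le_two, Real.sqrt_sq (norm_nonneg v), mul_assoc]

lemma l2normG_convC_le (f v : G → ℂ) :
    l2normG (convC f v) ≤ (∑ y, ‖f y‖) / Fintype.card G * l2normG v := by
  have hsum : ‖∑ y, f y • l2Translate y (WithLp.toLp 2 v)‖ ≤
      (∑ y, ‖f y‖) * ‖(WithLp.toLp 2 v : EuclideanSpace ℂ G)‖ := by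
    rw [Finset.sum_mul]
    refine (norm_sum_le _ _).trans (Finset.sum_le_sum fun y _ => ?_)
    rw [norm_smul, LinearIsometryEquiv.norm_map]
  rw [l2normG_eq_norm_div, l2normG_eq_norm_div, toLp_convC, norm_smul, norm_inv,
    Complex.norm_natCast]
  calc _ ≤ (Fintype.card G : ℝ)⁻¹ * ((∑ y, ‖f y‖) * ‖(WithLp.toLp 2 v : EuclideanSpace ℂ G)‖)
        / √(Fintype.card G) := by gcongr
    _ = _ := by ring

lemma bddAbove_PMnorm_set (f : G → ℂ) :
    BddAbove {r : ℝ | ∃ v : G → ℂ, l2normG v ≤ 1 ∧ r = l2normG (convC f v)} := by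
  refine ⟨(∑ y, ‖f y‖) / Fintype.card G, ?_⟩
  rintro _ ⟨v, hv, rfl⟩
  exact (l2normG_convC_le f v).trans (mul_le_of_le_one_right (by positivity) hv)

lemma l2normG_convC_le_PMnorm (f : G → ℂ) {v : G → ℂ} (hv : l2normG v ≤ 1) :
    l2normG (convC f v) ≤ PMnorm f :=
  le_csSup (bddAbove_PMnorm_set f) ⟨v, hv, rfl⟩

lemma PMnorm_le {f : G → ℂ} {C : ℝ} (hC : 0 ≤ C)
    (h : ∀ v, l2normG (convC f v) ≤ C * l2normG v) : PMnorm f ≤ C := by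
  refine Real.sSup_le ?_ hC
  rintro _ ⟨v, hv, rfl⟩
  exact (h v).trans (mul_le_of_le_one_right hC hv)

lemma l2normG_single [DecidableEq G] (x : G) (z : ℂ) :
    l2normG (Pi.single x z) = ‖z‖ / √(Fintype.card G) := by
  rw [l2normG_eq_norm_div]
  congr 1
  exact PiLp.norm_single 2 (fun _ => ℂ) x z

lemma convC_single_one [DecidableEq G] (f : G → ℂ) (z : ℂ) :
    convC f (Pi.single 1 z) = (z / Fintype.card G) • f := by
  ext x
  simp [convC, Pi.single_apply, inv_mul_eq_one, div_eq_inv_mul]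
  ring

lemma l2normG_le_sqrt_card_mul_PMnorm (f : G → ℂ) :
    l2normG f ≤ √(Fintype.card G) * PMnorm f := by
  classical
  have hN : 0 < √(Fintype.card G : ℝ) := Real.sqrt_pos.2 (by exact_mod_cast Fintype.card_pos)
  have hv : l2normG (Pi.single (1 : G) (√(Fintype.card G) : ℂ)) ≤ 1 := by
    rw [l2normG_single, Complex.norm_real, Real.norm_of_nonneg hN.le, div_self hN.ne']
  have h := l2normG_convC_le_PMnorm f hv
  have hscale : ‖((√(Fintype.card G) : ℝ) : ℂ) / Fintype.card G‖ = (√(Fintype.card G))⁻¹ := by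
    rw [norm_div, Complex.norm_real, Complex.norm_natCast, Real.norm_of_nonneg hN.le]
    field_simp
    exact Real.sq_sqrt (Nat.cast_nonneg _)
  rw [convC_single_one, l2normG_smul, hscale] at h
  exact (inv_mul_le_iff₀ hN).1 h

lemma innerG_eq_inner (f g : G → ℂ) :
    innerG f g = (Fintype.card G : ℂ)⁻¹ *
      inner ℂ (WithLp.toLp 2 g : EuclideanSpace ℂ G) (WithLp.toLp 2 f) := by
  simp [innerG, PiLp.inner_apply]

lemma norm_innerG_le (f g : G → ℂ) : ‖innerG f g‖ ≤ l2normG f * l2normG g := by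
  have hN : (0 : ℝ) < Fintype.card G := by exact_mod_cast Fintype.card_pos
  rw [innerG_eq_inner, norm_mul, norm_inv, Complex.norm_natCast, l2normG_eq_norm_div,
    l2normG_eq_norm_div, div_mul_div_comm, Real.mul_self_sqrt hN.le, ← div_eq_inv_mul]
  gcongr
  exact (norm_inner_le_norm _ _).trans_eq (mul_comm _ _)

lemma bddAbove_Anorm_set (f : G → ℂ) :
    BddAbove {r : ℝ | ∃ g : G → ℂ, PMnorm g ≤ 1 ∧ r = ‖innerG f g‖} := by
  refine ⟨l2normG f * √(Fintype.card G), ?_⟩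
  rintro _ ⟨g, hg, rfl⟩
  calc ‖innerG f g‖ ≤ l2normG f * l2normG g := norm_innerG_le f g
    _ ≤ l2normG f * (√(Fintype.card G) * PMnorm g) := by
      gcongr
      · exact l2normG_nonneg f
      · exact l2normG_le_sqrt_card_mul_PMnorm g
    _ ≤ l2normG f * √(Fintype.card G) := by
      gcongr
      · exact l2normG_nonneg f
      exact mul_le_of_le_one_right (Real.sqrt_nonneg _) hg

lemma norm_innerG_le_Anorm (f : G → ℂ) {g : G → ℂ} (hg : PMnorm g ≤ 1) :
    ‖innerG f g‖ ≤ Anorm f :=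
  le_csSup (bddAbove_Anorm_set f) ⟨g, hg, rfl⟩

section

variable [DecidableEq G]

def parallelogramWitness (a b c : G) : G → ℂ :=
  (((Fintype.card G : ℝ) / (2 * √2) : ℝ) : ℂ) •
    (Pi.single a 1 + Pi.single b 1 + Pi.single c 1 - Pi.single (a * b⁻¹ * c) 1)

lemma toLp_convC_parallelogramWitness (a b c : G) (v : G → ℂ) :
    (WithLp.toLp 2 (convC (parallelogramWitness a b c) v) : EuclideanSpace ℂ G) =
      ((2 * √2 : ℝ) : ℂ)⁻¹ • (l2Translate a (WithLp.toLp 2 v) + l2Translate b (WithLp.toLp 2 v)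
        + l2Translate c (WithLp.toLp 2 v) - l2Translate (a * b⁻¹ * c) (WithLp.toLp 2 v)) := by
  rw [toLp_convC]
  ext x
  simp only [parallelogramWitness, PiLp.smul_apply, PiLp.add_apply, PiLp.sub_apply, WithLp.ofLp_sum,
    Finset.sum_apply, Pi.smul_apply, Pi.add_apply, Pi.sub_apply, smul_eq_mul, l2Translate_apply,
    add_mul, sub_mul, mul_assoc, Finset.sum_add_distrib, Finset.sum_sub_distrib, ← Finset.mul_sum,
    Pi.single_apply, ite_mul, one_mul, zero_mul, Finset.sum_ite_eq', Finset.mem_univ, if_true]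
  rw [← mul_assoc]
  congr 1
  push_cast
  field_simp

lemma PMnorm_parallelogramWitness_le_one (a b c : G) : PMnorm (parallelogramWitness a b c) ≤ 1 := by
  refine PMnorm_le zero_le_one fun v => ?_
  have h2 : (0 : ℝ) < 2 * √2 := by positivity
  rw [one_mul, l2normG_eq_norm_div, l2normG_eq_norm_div, toLp_convC_parallelogramWitness,
    norm_smul, norm_inv, Complex.norm_real, Real.norm_of_nonneg h2.le]
  gcongr
  exact (inv_mul_le_iff₀ h2).2 (norm_l2Translate_parallelogram_le a b c _)

lemma innerG_indC_parallelogramWitness {A : Set G} {a b c : G} (ha : a ∈ A) (hb : b ∈ A)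
    (hc : c ∈ A) (hd : a * b⁻¹ * c ∉ A) :
    innerG (indC A) (parallelogramWitness a b c) = ((3 / (2 * √2) : ℝ) : ℂ) := by
  simp only [innerG, parallelogramWitness, Pi.smul_apply, Pi.add_apply, Pi.sub_apply, smul_eq_mul,
    map_add, map_sub, Complex.conj_ofReal, mul_add, mul_sub, Finset.sum_add_distrib,
    Finset.sum_sub_distrib, Pi.single_apply, apply_ite (starRingEnd ℂ), map_zero, mul_ite,
    mul_one, mul_zero, Finset.sum_ite_eq', Finset.mem_univ, if_true]
  simp only [indC, Set.indicator_of_mem ha, Set.indicator_of_mem hb, Set.indicator_of_mem hc,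
    Set.indicator_of_notMem hd, Pi.one_apply]
  push_cast
  field_simp
  ring

end

end

/-- Indicator functions of algebra norm less than `1 + 1/750` are right cosets. -/
theorem indicator_small_algebra_norm_is_coset {G : Type*} [Group G] [Fintype G]
    (A : Set G) (hA : A.Nonempty) (h : Anorm (indC A) < 1 + 1 / 750) :
    ∃ (H : Subgroup G) (x : G), A = (fun h => h * x) '' (H : Set G) := by
  classical
  by_cases hA3 : ∀ a ∈ A, ∀ b ∈ A, ∀ c ∈ A, a * b⁻¹ * c ∈ A
  · exact exists_eq_image_mul_right_of_mul_inv_mul_mem hA hA3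
  push Not at hA3
  obtain ⟨a, ha, b, hb, c, hc, hd⟩ := hA3
  have hlower : 3 / (2 * √2) ≤ Anorm (indC A) := by
    have := norm_innerG_le_Anorm (indC A) (PMnorm_parallelogramWitness_le_one a b c)
    rwa [innerG_indC_parallelogramWitness ha hb hc hd, Complex.norm_real,
      Real.norm_of_nonneg (by positivity)] at this
  have hsqrt2 : 1 + 1 / 750 < 3 / (2 * √2) := by
    rw [lt_div_iff₀ (by positivity)]
    nlinarith [Real.sq_sqrt (zero_le_two : (0 : ℝ) ≤ 2), Real.sqrt_nonneg 2]
  linarith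
end
end

section
/- Explicit formula for the algebra norm: Let G be a finite group with |G| = N and let f : G → ℂ. Suppose v₁, …, v_N is an orthonormal basis of L²(μ_G) and s₁, …, s_N are nonnegative reals such that L_f*(L_f(v_i)) = s_i²·v_i for every 1 ≤ i ≤ N, where L_f* denotes the adjoint of L_f with respect to the inner product of L²(μ_G). Then ‖f‖_{A(G)} = ∑_{i=1}^N s_i. -/
open scoped BigOperators Pointwise

noncomputable section

variable {G : Type*}

/-!
Writing `⟨f, g⟩ = ∑ i ⟨f ∗ vᵢ, g ∗ vᵢ⟩` (the trace of `L_g* L_f`, computed in the basis `v`),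
Cauchy–Schwarz gives `|⟨f, g⟩| ≤ (∑ sᵢ) ‖g‖_{PM(G)}`. For the reverse inequality take
`g₀ = ∑ sᵢ⁻¹ (f ∗ vᵢ) ∗ vᵢ*` with `v*(x) = conj (v x⁻¹)`, so that
`⟨f, g₀⟩ = ∑ sᵢ⁻¹ ‖f ∗ vᵢ‖² = ∑ sᵢ` (with `0⁻¹ = 0` discarding the kernel of `L_f`).
Convolution by `g₀` is the average over `a ∈ G` of the conjugates, by right translation by `a`,
of the partial isometry `U = ∑ sᵢ⁻¹ |f ∗ vᵢ⟩⟨vᵢ|` of the polar decomposition of `L_f`;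
hence `‖g₀‖_{PM(G)} ≤ 1`.
-/

open Finset
open scoped ComplexConjugate InnerProductSpace

namespace AlgebraNorm

variable [Group G] [Fintype G]

lemma sqrt_card_ne_zero : (Real.sqrt (Fintype.card G) : ℂ) ≠ 0 := by
  have : (0 : ℝ) < Fintype.card G := by exact_mod_cast Fintype.card_pos
  exact_mod_cast (Real.sqrt_pos.2 this).ne'

/-- `f ↦ |G|^{-1/2} f` identifies `L²(μ_G)` isometrically with `EuclideanSpace ℂ G`. -/
def toL2 : (G → ℂ) ≃ₗ[ℂ] EuclideanSpace ℂ G :=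
  (LinearEquiv.smulOfNeZero ℂ (G → ℂ) _ (inv_ne_zero (sqrt_card_ne_zero (G := G)))).trans
    (WithLp.linearEquiv 2 ℂ (G → ℂ)).symm

lemma toL2_apply (f : G → ℂ) (x : G) :
    toL2 f x = (Real.sqrt (Fintype.card G) : ℂ)⁻¹ * f x := by
  simp [toL2]

/-- The arguments are swapped: Mathlib's inner product is conjugate-linear in the first one. -/
lemma innerG_eq_inner (f g : G → ℂ) : innerG f g = ⟪toL2 g, toL2 f⟫_ℂ := by
  have hN : (Real.sqrt (Fintype.card G) : ℂ)⁻¹ * (Real.sqrt (Fintype.card G) : ℂ)⁻¹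
      = (Fintype.card G : ℂ)⁻¹ := by
    rw [← mul_inv, ← Complex.ofReal_mul, Real.mul_self_sqrt (Nat.cast_nonneg _),
      Complex.ofReal_natCast]
  simp only [innerG, PiLp.inner_apply, toL2_apply, RCLike.inner_apply, map_mul, map_inv₀,
    Complex.conj_ofReal, Finset.mul_sum]
  refine Finset.sum_congr rfl fun x _ => ?_
  rw [← hN]
  ring

lemma l2normG_eq_norm (f : G → ℂ) : l2normG f = ‖toL2 f‖ := by
  have h : innerG f f = (((Fintype.card G : ℝ)⁻¹ * ∑ x, ‖f x‖ ^ 2 : ℝ) : ℂ) := by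
    simp only [innerG, Complex.mul_conj, Complex.normSq_eq_norm_sq]
    push_cast
    rfl
  rw [norm_eq_sqrt_re_inner (𝕜 := ℂ), ← innerG_eq_inner, h, RCLike.re_to_complex,
    Complex.ofReal_re, l2normG]

lemma l2normG_nonneg (f : G → ℂ) : 0 ≤ l2normG f := Real.sqrt_nonneg _

lemma sq_l2normG (f : G → ℂ) : l2normG f ^ 2 = (innerG f f).re := by
  rw [l2normG_eq_norm, innerG_eq_inner, ← inner_self_eq_norm_sq (𝕜 := ℂ)]
  rfl

lemma norm_innerG_le (f g : G → ℂ) : ‖innerG f g‖ ≤ l2normG f * l2normG g := by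
  rw [innerG_eq_inner, l2normG_eq_norm, l2normG_eq_norm, mul_comm]
  exact norm_inner_le_norm _ _

lemma innerG_sum_left {ι : Type*} (t : Finset ι) (h : ι → G → ℂ) (f : G → ℂ) :
    innerG (∑ i ∈ t, h i) f = ∑ i ∈ t, innerG (h i) f := by
  simp only [innerG_eq_inner, map_sum, inner_sum]

lemma innerG_sum_right {ι : Type*} (t : Finset ι) (f : G → ℂ) (h : ι → G → ℂ) :
    innerG f (∑ i ∈ t, h i) = ∑ i ∈ t, innerG f (h i) := by
  simp only [innerG_eq_inner, map_sum, sum_inner]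

lemma innerG_smul_left (c : ℂ) (h f : G → ℂ) : innerG (c • h) f = c * innerG h f := by
  simp only [innerG_eq_inner, map_smul, inner_smul_right]

lemma innerG_smul_right (c : ℂ) (f h : G → ℂ) : innerG f (c • h) = conj c * innerG f h := by
  simp only [innerG_eq_inner, map_smul, inner_smul_left]

lemma l2normG_comp_mul_right (w : G → ℂ) (a : G) :
    l2normG (fun z => w (z * a)) = l2normG w := by
  simp only [l2normG]
  congr 2
  exact Fintype.sum_equiv (Equiv.mulRight a) _ _ fun _ => rfl

def adjC (f : G → ℂ) : G → ℂ := fun x => conj (f x⁻¹)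

lemma convC_assoc (a b c : G → ℂ) : convC (convC a b) c = convC a (convC b c) := by
  funext x
  simp only [convC, Finset.mul_sum, Finset.sum_mul]
  rw [Finset.sum_comm]
  refine Finset.sum_congr rfl fun y _ => ?_
  refine Fintype.sum_equiv (Equiv.mulLeft y⁻¹) _ _ fun z => ?_
  simp only [Equiv.coe_mulLeft, mul_inv_rev, inv_inv, mul_assoc, mul_inv_cancel_left]
  ring

lemma convC_apply_eq_sum (u h : G → ℂ) (x : G) :
    convC u h x = (Fintype.card G : ℂ)⁻¹ * ∑ a, u (x * a⁻¹) * h a := by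
  rw [convC]
  congr 1
  exact Fintype.sum_equiv ((Equiv.inv G).trans (Equiv.mulRight x)) _ _ fun y => by simp

lemma convC_adjC_apply (v w : G → ℂ) (b : G) :
    convC (adjC v) w b = innerG (fun z => w (z * b)) v := by
  rw [convC, innerG]
  congr 1
  exact Fintype.sum_equiv (Equiv.inv G) _ _ fun y => by simp [adjC, mul_comm]

lemma innerG_convC_left (f v h : G → ℂ) :
    innerG (convC f v) h = innerG f (convC h (adjC v)) := by
  simp only [innerG, convC, adjC, map_mul, map_sum, map_inv₀, map_natCast, Complex.conj_conj,
    mul_inv_rev, inv_inv, Finset.mul_sum, Finset.sum_mul]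
  rw [Finset.sum_comm]
  exact Finset.sum_congr rfl fun y _ => Finset.sum_congr rfl fun x _ => by ring

lemma convC_single_one [DecidableEq G] (g : G → ℂ) :
    convC g (Pi.single 1 (Fintype.card G : ℂ)) = g := by
  have hN : (Fintype.card G : ℂ) ≠ 0 := by exact_mod_cast Fintype.card_ne_zero
  funext x
  rw [convC, Finset.sum_eq_single x (fun y _ hy => by simp [inv_mul_eq_one, hy]) (by simp),
    inv_mul_cancel, Pi.single_eq_same]
  field_simp

lemma convC_sum_smul_left {ι : Type*} (t : Finset ι) (c : ι → ℂ) (k : ι → G → ℂ)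
    (w : G → ℂ) : convC (∑ i ∈ t, c i • k i) w = ∑ i ∈ t, c i • convC (k i) w := by
  funext x
  simp only [convC, Finset.sum_apply, Pi.smul_apply, smul_eq_mul, Finset.sum_mul,
    Finset.mul_sum]
  rw [Finset.sum_comm]
  exact Finset.sum_congr rfl fun i _ => Finset.sum_congr rfl fun y _ => by ring

def convCLinear (g : G → ℂ) : (G → ℂ) →ₗ[ℂ] G → ℂ where
  toFun := convC g
  map_add' u w := by
    funext x
    simp only [convC, Pi.add_apply, mul_add, Finset.sum_add_distrib]
  map_smul' c w := by
    funext x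
    simp only [convC, Pi.smul_apply, smul_eq_mul, RingHom.id_apply, Finset.mul_sum]
    exact Finset.sum_congr rfl fun y _ => by ring

lemma convC_sum_right {ι : Type*} (t : Finset ι) (g : G → ℂ) (w : ι → G → ℂ) :
    convC g (∑ i ∈ t, w i) = ∑ i ∈ t, convC g (w i) :=
  map_sum (convCLinear g) w t

lemma bddAbove_l2normG_convC (g : G → ℂ) :
    BddAbove {r : ℝ | ∃ v : G → ℂ, l2normG v ≤ 1 ∧ r = l2normG (convC g v)} := by
  let A := LinearMap.toContinuousLinearMap
    (toL2.toLinearMap ∘ₗ convCLinear g ∘ₗ (toL2 (G := G)).symm.toLinearMap)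
  refine ⟨‖A‖, ?_⟩
  rintro r ⟨v, hv, rfl⟩
  have hA : toL2 (convC g v) = A (toL2 v) := by simp [A, convCLinear]
  rw [l2normG_eq_norm, hA]
  calc ‖A (toL2 v)‖ ≤ ‖A‖ * ‖toL2 v‖ := A.le_opNorm _
    _ ≤ ‖A‖ := by
      rw [← l2normG_eq_norm]
      exact mul_le_of_le_one_right (norm_nonneg _) hv

lemma l2normG_convC_le_PMnorm (g w : G → ℂ) (hw : l2normG w ≤ 1) :
    l2normG (convC g w) ≤ PMnorm g :=
  le_csSup (bddAbove_l2normG_convC g) ⟨w, hw, rfl⟩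

lemma PMnorm_le {g : G → ℂ} {C : ℝ} (hC : 0 ≤ C)
    (h : ∀ w, l2normG w ≤ 1 → l2normG (convC g w) ≤ C) : PMnorm g ≤ C :=
  Real.sSup_le (by rintro r ⟨w, hw, rfl⟩; exact h w hw) hC

section Orthonormal

variable {ι : Type*} [DecidableEq ι] {v : ι → G → ℂ}

lemma orthonormal_toL2 (hortho : ∀ i j, innerG (v i) (v j) = if i = j then 1 else 0) :
    Orthonormal ℂ (toL2 ∘ v) := by
  rw [orthonormal_iff_ite]
  intro i j
  rw [Function.comp_apply, Function.comp_apply, ← innerG_eq_inner, hortho]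
  exact if_congr eq_comm rfl rfl

lemma l2normG_eq_one (hortho : ∀ i j, innerG (v i) (v j) = if i = j then 1 else 0) (i : ι) :
    l2normG (v i) = 1 := by
  rw [← sq_eq_sq₀ (l2normG_nonneg _) zero_le_one, one_pow, sq_l2normG, hortho, if_pos rfl,
    Complex.one_re]

lemma l2normG_convC_eq {f : G → ℂ} {s : ι → ℝ}
    (hu : ∀ i j, innerG (convC f (v j)) (convC f (v i)) = (s i : ℂ) ^ 2 * if j = i then 1 else 0)
    {i : ι} (hs : 0 ≤ s i) : l2normG (convC f (v i)) = s i := by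
  rw [← sq_eq_sq₀ (l2normG_nonneg _) hs, sq_l2normG, hu, if_pos rfl, mul_one]
  norm_cast

variable [Fintype ι]

lemma sum_norm_innerG_sq_le (hortho : ∀ i j, innerG (v i) (v j) = if i = j then 1 else 0)
    (w : G → ℂ) : ∑ i, ‖innerG w (v i)‖ ^ 2 ≤ l2normG w ^ 2 := by
  simpa only [innerG_eq_inner, l2normG_eq_norm, Function.comp_apply] using
    (orthonormal_toL2 hortho).sum_inner_products_le (toL2 w) (s := univ)

variable [DecidableEq G]

lemma sum_mul_conj_eq (hcard : Fintype.card ι = Fintype.card G)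
    (hortho : ∀ i j, innerG (v i) (v j) = if i = j then 1 else 0) (a b : G) :
    ∑ i, v i a * conj (v i b) = if a = b then (Fintype.card G : ℂ) else 0 := by
  have hv := orthonormal_toL2 hortho
  let B := OrthonormalBasis.mk hv
    (hv.linearIndependent.span_eq_top_of_card_eq_finrank' (by simpa using hcard)).ge
  have h := B.sum_inner_mul_inner (EuclideanSpace.single a (Real.sqrt (Fintype.card G) : ℂ))
    (EuclideanSpace.single b (Real.sqrt (Fintype.card G) : ℂ))
  simp only [B, OrthonormalBasis.coe_mk, Function.comp_apply, EuclideanSpace.inner_single_left,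
    EuclideanSpace.inner_single_right, toL2_apply, map_mul, map_inv₀, Complex.conj_ofReal,
    mul_inv_cancel_left₀ sqrt_card_ne_zero, PiLp.single_apply] at h
  rw [h, apply_ite (starRingEnd ℂ), Complex.conj_ofReal, map_zero, mul_ite, mul_zero,
    ← Complex.ofReal_mul, Real.mul_self_sqrt (Nat.cast_nonneg _), Complex.ofReal_natCast]
  exact if_congr eq_comm rfl rfl

lemma sum_convC_adjC_self (hcard : Fintype.card ι = Fintype.card G)
    (hortho : ∀ i j, innerG (v i) (v j) = if i = j then 1 else 0) :
    ∑ i, convC (v i) (adjC (v i)) = Pi.single 1 (Fintype.card G : ℂ) := by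
  funext y
  simp only [Finset.sum_apply, convC, adjC, ← Finset.mul_sum]
  rw [Finset.sum_comm]
  simp [sum_mul_conj_eq hcard hortho, Pi.single_apply]

lemma innerG_eq_sum_innerG_convC (hcard : Fintype.card ι = Fintype.card G)
    (hortho : ∀ i j, innerG (v i) (v j) = if i = j then 1 else 0) (f g : G → ℂ) :
    innerG f g = ∑ i, innerG (convC f (v i)) (convC g (v i)) := by
  simp only [innerG_convC_left, convC_assoc]
  rw [← innerG_sum_right, ← convC_sum_right, sum_convC_adjC_self hcard hortho, convC_single_one]

lemma norm_innerG_le_sum_mul_PMnorm {f : G → ℂ} {s : ι → ℝ}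
    (hcard : Fintype.card ι = Fintype.card G)
    (hortho : ∀ i j, innerG (v i) (v j) = if i = j then 1 else 0) (hs : ∀ i, 0 ≤ s i)
    (hu : ∀ i j, innerG (convC f (v j)) (convC f (v i)) = (s i : ℂ) ^ 2 * if j = i then 1 else 0)
    (g : G → ℂ) : ‖innerG f g‖ ≤ (∑ i, s i) * PMnorm g := by
  rw [innerG_eq_sum_innerG_convC hcard hortho, Finset.sum_mul]
  refine (norm_sum_le _ _).trans (Finset.sum_le_sum fun i _ => ?_)
  calc ‖innerG (convC f (v i)) (convC g (v i))‖
      ≤ l2normG (convC f (v i)) * l2normG (convC g (v i)) := norm_innerG_le _ _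
    _ ≤ s i * PMnorm g := by
      rw [l2normG_convC_eq hu (hs i)]
      exact mul_le_mul_of_nonneg_left
        (l2normG_convC_le_PMnorm _ _ (l2normG_eq_one hortho i).le) (hs i)

end Orthonormal

section DualWitness

variable {ι : Type*} [Fintype ι] (f : G → ℂ) (v : ι → G → ℂ) (s : ι → ℝ)

def dualWitness : G → ℂ := ∑ i, (s i : ℂ)⁻¹ • convC (convC f (v i)) (adjC (v i))

def partialIsometry (w : G → ℂ) : G → ℂ :=
  ∑ i, ((s i : ℂ)⁻¹ * innerG w (v i)) • convC f (v i)

variable {f v s}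

lemma innerG_dualWitness [DecidableEq ι]
    (hu : ∀ i j, innerG (convC f (v j)) (convC f (v i)) = (s i : ℂ) ^ 2 * if j = i then 1 else 0) :
    innerG f (dualWitness f v s) = ∑ i, s i := by
  simp only [dualWitness, innerG_sum_right, innerG_smul_right, ← innerG_convC_left, hu]
  push_cast
  refine Finset.sum_congr rfl fun i _ => ?_
  rw [map_inv₀, Complex.conj_ofReal]
  rcases eq_or_ne (s i : ℂ) 0 with h | h
  · simp [h]
  · field_simp

lemma l2normG_partialIsometry_le [DecidableEq ι]
    (hortho : ∀ i j, innerG (v i) (v j) = if i = j then 1 else 0)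
    (hu : ∀ i j, innerG (convC f (v j)) (convC f (v i)) = (s i : ℂ) ^ 2 * if j = i then 1 else 0)
    (w : G → ℂ) : l2normG (partialIsometry f v s w) ≤ l2normG w := by
  refine (pow_le_pow_iff_left₀ (l2normG_nonneg _) (l2normG_nonneg _) two_ne_zero).1 ?_
  rw [sq_l2normG]
  simp only [partialIsometry, innerG_sum_left, innerG_sum_right, innerG_smul_left,
    innerG_smul_right, hu, mul_ite, mul_one, mul_zero, Finset.sum_ite_eq', Finset.mem_univ,
    if_true, Complex.re_sum]
  refine le_trans (Finset.sum_le_sum fun i _ => ?_) (sum_norm_innerG_sq_le hortho w)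
  rw [map_mul, map_inv₀, Complex.conj_ofReal]
  rcases eq_or_ne (s i : ℂ) 0 with h | h
  · simp [h]
  · rw [show (s i : ℂ)⁻¹ * conj (innerG w (v i)) * ((s i : ℂ)⁻¹ * innerG w (v i) * (s i : ℂ) ^ 2)
        = conj (innerG w (v i)) * innerG w (v i) by field_simp, Complex.conj_mul']
    norm_cast

lemma convC_dualWitness (w : G → ℂ) :
    convC (dualWitness f v s) w = (Fintype.card G : ℂ)⁻¹ •
      ∑ a, fun x => partialIsometry f v s (fun z => w (z * a)) (x * a⁻¹) := by
  rw [dualWitness, convC_sum_smul_left]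
  simp only [convC_assoc (convC f _)]
  funext x
  simp only [Finset.sum_apply, Pi.smul_apply, smul_eq_mul, convC_apply_eq_sum (convC f _)]
  simp only [convC_adjC_apply, partialIsometry, Finset.sum_apply, Pi.smul_apply, smul_eq_mul,
    Finset.mul_sum]
  rw [Finset.sum_comm]
  exact Finset.sum_congr rfl fun _ _ => Finset.sum_congr rfl fun _ _ => by ring

lemma PMnorm_dualWitness_le_one [DecidableEq ι]
    (hortho : ∀ i j, innerG (v i) (v j) = if i = j then 1 else 0)
    (hu : ∀ i j, innerG (convC f (v j)) (convC f (v i)) = (s i : ℂ) ^ 2 * if j = i then 1 else 0) :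
    PMnorm (dualWitness f v s) ≤ 1 := by
  have hN : (Fintype.card G : ℝ) ≠ 0 := by exact_mod_cast Fintype.card_ne_zero
  refine PMnorm_le zero_le_one fun w hw => ?_
  rw [convC_dualWitness, l2normG_eq_norm, map_smul, map_sum, norm_smul, norm_inv,
    Complex.norm_natCast]
  calc (Fintype.card G : ℝ)⁻¹
        * ‖∑ a, toL2 fun x => partialIsometry f v s (fun z => w (z * a)) (x * a⁻¹)‖
      ≤ (Fintype.card G : ℝ)⁻¹ * ∑ a, l2normG (partialIsometry f v s fun z => w (z * a)) := by
        gcongr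
        refine (norm_sum_le _ _).trans_eq (Finset.sum_congr rfl fun a _ => ?_)
        rw [← l2normG_eq_norm, l2normG_comp_mul_right (partialIsometry f v s _) a⁻¹]
    _ ≤ (Fintype.card G : ℝ)⁻¹ * ∑ a : G, l2normG fun z => w (z * a) := by
        gcongr with a
        exact l2normG_partialIsometry_le hortho hu _
    _ = l2normG w := by
        simp only [l2normG_comp_mul_right, Finset.sum_const, Finset.card_univ, nsmul_eq_mul]
        field_simp
    _ ≤ 1 := hw

end DualWitness

end AlgebraNorm

open AlgebraNorm in
/-- Explicit formula for the algebra norm: `‖f‖_{A(G)}` is the sum of the singular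
values of `L_f`.  Here `v` is an orthonormal basis of `L²(μ_G)` diagonalizing
`L_f* ∘ L_f` (the adjoint condition is expressed via the inner product) with
eigenvalues `(s i)²`. -/
theorem algebra_norm_explicit_formula {G : Type*} [Group G] [Fintype G] (f : G → ℂ)
    (v : Fin (Fintype.card G) → G → ℂ) (s : Fin (Fintype.card G) → ℝ)
    (hortho : ∀ i j, innerG (v i) (v j) = if i = j then 1 else 0)
    (hs : ∀ i, 0 ≤ s i)
    (hadj : ∀ i, ∀ w : G → ℂ,
      innerG (convC f w) (convC f (v i)) = ((s i : ℂ)) ^ 2 * innerG w (v i)) :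
    Anorm f = ∑ i, s i := by
  classical
  have hcard : Fintype.card (Fin (Fintype.card G)) = Fintype.card G := Fintype.card_fin _
  have hu : ∀ i j, innerG (convC f (v j)) (convC f (v i))
      = (s i : ℂ) ^ 2 * if j = i then 1 else 0 := fun i j => by rw [hadj, hortho]
  have hsum : 0 ≤ ∑ i, s i := Finset.sum_nonneg fun i _ => hs i
  have hbound : ∀ r ∈ {r : ℝ | ∃ g : G → ℂ, PMnorm g ≤ 1 ∧ r = ‖innerG f g‖}, r ≤ ∑ i, s i := by
    rintro r ⟨g, hg, rfl⟩
    exact (norm_innerG_le_sum_mul_PMnorm hcard hortho hs hu g).trans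
      (mul_le_of_le_one_right hsum hg)
  refine le_antisymm (Real.sSup_le hbound hsum) (le_csSup ⟨_, hbound⟩
    ⟨dualWitness f v s, PMnorm_dualWitness_le_one hortho hu, ?_⟩)
  rw [innerG_dualWitness hu, Complex.norm_real, Real.norm_of_nonneg hsum]
end
end

section
/- Fournier-type lemma: Suppose that G is a finite group, A ⊆ G is nonempty, c ∈ [0,1] is such that ‖1_A∗1_{A⁻¹}‖²_{L²(μ_G)} ≥ (1−c)·μ_G(A)³, and η is a real parameter with 0 < η, 12c ≤ η and η < 1/12. Then there is a subgroup H ≤ G and some x ∈ G such that μ_G(H) ≥ (1 − c·η⁻¹)·μ_G(A) and μ_G(A ∩ Hx) ≥ (1 − 2η)·μ_G(H). -/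
open scoped BigOperators Pointwise

noncomputable section

variable {G : Type*}

/-
Write `g x = |A ∩ xA|`, so that `1_A ∗ 1_{A⁻¹} = g / |G|`, `∑ g = |A|²`, `0 ≤ g ≤ |A|`,
`g x⁻¹ = g x` and `g x + g y ≤ |A| + g (xy)`. The energy hypothesis says
`∑ g (|A| - g) ≤ c |A|³`: apart from a small error, `g` takes values near `0` or near `|A|`.
Hence `B = {g ≥ (1 - η)|A|}` has at least `(1 - c/η)|A|` elements, while
`S = {g ≥ (1 - 2η)|A|}` has barely more than `|A|`. Superadditivity gives `B·B ⊆ S`, so `B` has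
doubling less than `3/2` and `H = B⁻¹B = BB` is a subgroup. As `H ⊆ S`, the energy bound also
controls `∑_{h ∈ H} (|A| - g h)`, whence `∑_{h ∈ H} g h ≥ (1 - 2η)|H||A|`. This sum counts the pairs
of `A` whose quotient lies in `H`, i.e. it equals `∑_{x ∈ A} |A ∩ Hx|`, so some coset `Hx` works.
-/

open Finset MulOpposite

section LevelSets

variable {ι : Type*} [Fintype ι] {g : ι → ℝ} {α c : ℝ}

theorem sum_mul_sub_le_univ_sum (hg0 : ∀ x, 0 ≤ g x) (hgα : ∀ x, g x ≤ α) (t : Finset ι) :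
    ∑ x ∈ t, g x * (α - g x) ≤ ∑ x, g x * (α - g x) :=
  sum_le_univ_sum_of_nonneg fun x => mul_nonneg (hg0 x) (sub_nonneg.2 (hgα x))

theorem le_card_superlevel (hg0 : ∀ x, 0 ≤ g x) (hgα : ∀ x, g x ≤ α)
    (hsum : ∑ x, g x = α ^ 2) (hdef : ∑ x, g x * (α - g x) ≤ c * α ^ 3)
    (hα : 0 < α) {η : ℝ} (hη : 0 < η) :
    (1 - c * η⁻¹) * α ≤ #{x | (1 - η) * α ≤ g x} := by
  classical
  set B : Finset ι := {x | (1 - η) * α ≤ g x}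
  have hlow : η * α * ∑ x ∈ Bᶜ, g x ≤ c * α ^ 3 := calc
    η * α * ∑ x ∈ Bᶜ, g x = ∑ x ∈ Bᶜ, η * α * g x := mul_sum ..
    _ ≤ ∑ x ∈ Bᶜ, g x * (α - g x) := sum_le_sum fun x hx => by
        simp only [B, mem_compl, mem_filter_univ, not_le] at hx; nlinarith [hg0 x]
    _ ≤ c * α ^ 3 := (sum_mul_sub_le_univ_sum hg0 hgα _).trans hdef
  have hhigh : ∑ x ∈ B, g x ≤ #B * α := by
    simpa using sum_le_card_nsmul B g α fun x _ => hgα x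
  have hcompl : η * ∑ x ∈ Bᶜ, g x ≤ c * α ^ 2 :=
    le_of_mul_le_mul_left (by nlinarith : α * (η * ∑ x ∈ Bᶜ, g x) ≤ α * (c * α ^ 2)) hα
  have hsplit := sum_add_sum_compl B g
  rw [hsum] at hsplit
  have hmain : (η * α - c * α) * α ≤ η * #B * α := by
    nlinarith [mul_le_mul_of_nonneg_left hhigh hη.le]
  refine le_of_mul_le_mul_left ?_ hη
  calc η * ((1 - c * η⁻¹) * α) = η * α - c * α := by field_simp
    _ ≤ η * #B := le_of_mul_le_mul_right hmain hα

theorem mul_sum_sub_le_of_subset_superlevel (hg0 : ∀ x, 0 ≤ g x) (hgα : ∀ x, g x ≤ α)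
    (hdef : ∑ x, g x * (α - g x) ≤ c * α ^ 3) (hα : 0 < α) {t : ℝ} {K : Finset ι}
    (hK : K ⊆ ({x | t * α ≤ g x} : Finset ι)) :
    t * ∑ x ∈ K, (α - g x) ≤ c * α ^ 2 := by
  refine le_of_mul_le_mul_left ?_ hα
  calc α * (t * ∑ x ∈ K, (α - g x)) = ∑ x ∈ K, t * α * (α - g x) := by
        rw [mul_sum, mul_sum]; ring_nf
    _ ≤ ∑ x ∈ K, g x * (α - g x) := sum_le_sum fun x hx =>
        mul_le_mul_of_nonneg_right ((mem_filter_univ x).1 (hK hx)) (sub_nonneg.2 (hgα x))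
    _ ≤ α * (c * α ^ 2) := (sum_mul_sub_le_univ_sum hg0 hgα _).trans (by linarith)

theorem mul_card_superlevel_le (hg0 : ∀ x, 0 ≤ g x) (hgα : ∀ x, g x ≤ α)
    (hsum : ∑ x, g x = α ^ 2) (hdef : ∑ x, g x * (α - g x) ≤ c * α ^ 3)
    (hα : 0 < α) {t : ℝ} (ht : 0 ≤ t) :
    t * #{x | t * α ≤ g x} ≤ (t + c) * α := by
  set S : Finset ι := {x | t * α ≤ g x}
  have hdefS := mul_sum_sub_le_of_subset_superlevel hg0 hgα hdef hα (subset_refl S)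
  have hgS : ∑ x ∈ S, g x ≤ α ^ 2 := hsum ▸ sum_le_univ_sum_of_nonneg hg0
  have hsplit : ∑ x ∈ S, g x + ∑ x ∈ S, (α - g x) = #S * α := by
    rw [← sum_add_distrib]; simp
  refine le_of_mul_le_mul_right ?_ hα
  nlinarith

end LevelSets

section Superlevel

variable [Group G] [Fintype G] [DecidableEq G] {g : G → ℝ} {α : ℝ}

theorem superlevel_mul_superlevel_subset (hg : ∀ x y, g x + g y ≤ α + g (x * y)) (η : ℝ) :
    ({x | (1 - η) * α ≤ g x} : Finset G) * ({x | (1 - η) * α ≤ g x} : Finset G) ⊆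
      ({x | (1 - 2 * η) * α ≤ g x} : Finset G) := by
  intro z hz
  obtain ⟨x, hx, y, hy, rfl⟩ := mem_mul.1 hz
  simp only [mem_filter_univ] at hx hy ⊢
  linarith [hg x y]

theorem inv_superlevel (hg : ∀ x, g x⁻¹ = g x) (r : ℝ) :
    ({x | r ≤ g x} : Finset G)⁻¹ = ({x | r ≤ g x} : Finset G) := by
  ext x
  simp [hg]

theorem card_superlevel_mul_superlevel_lt {c η : ℝ} (hg0 : ∀ x, 0 ≤ g x) (hgα : ∀ x, g x ≤ α)
    (hgmul : ∀ x y, g x + g y ≤ α + g (x * y)) (hsum : ∑ x, g x = α ^ 2)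
    (hdef : ∑ x, g x * (α - g x) ≤ c * α ^ 3) (hα : 0 < α) (hη : 0 < η) (hcη : 12 * c ≤ η)
    (hη12 : η < 1 / 12) :
    (#(({x | (1 - η) * α ≤ g x} : Finset G) * ({x | (1 - η) * α ≤ g x} : Finset G)) : ℚ) <
      3 / 2 * #({x | (1 - η) * α ≤ g x} : Finset G) := by
  have hB := le_card_superlevel hg0 hgα hsum hdef hα hη
  have hS := mul_card_superlevel_le hg0 hgα hsum hdef hα (t := 1 - 2 * η) (by linarith)
  have hBBS := Nat.cast_le (α := ℝ).2 (card_le_card (superlevel_mul_superlevel_subset hgmul η))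
  have hcη' : c * η⁻¹ ≤ 1 / 12 := by rw [mul_inv_le_iff₀ hη]; linarith
  refine (Rat.cast_lt (K := ℝ)).1 ?_
  push_cast
  nlinarith

theorem exists_subgroup_of_sum_mul_sub_le {c η : ℝ} (hg0 : ∀ x, 0 ≤ g x) (hgα : ∀ x, g x ≤ α)
    (hginv : ∀ x, g x⁻¹ = g x) (hgmul : ∀ x y, g x + g y ≤ α + g (x * y))
    (hsum : ∑ x, g x = α ^ 2) (hdef : ∑ x, g x * (α - g x) ≤ c * α ^ 3) (hα : 0 < α)
    (hη : 0 < η) (hcη : 12 * c ≤ η) (hη12 : η < 1 / 12) :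
    ∃ (H : Subgroup G) (K : Finset G), (H : Set G) = K ∧ (1 - c * η⁻¹) * α ≤ #K ∧
      (1 - 2 * η) * #K * α ≤ ∑ h ∈ K, g h := by
  set B : Finset G := {x | (1 - η) * α ≤ g x}
  have hB : (1 - c * η⁻¹) * α ≤ #B := le_card_superlevel hg0 hgα hsum hdef hα hη
  have hcη' : c * η⁻¹ ≤ 1 / 12 := by rw [mul_inv_le_iff₀ hη]; linarith
  have hBne : B.Nonempty := card_pos.1 (by exact_mod_cast (by nlinarith : (0 : ℝ) < #B))
  have hBK : (#B : ℝ) ≤ #(B * B) := Nat.cast_le.2 (card_le_card_mul_left hBne)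
  have hdoubling := card_superlevel_mul_superlevel_lt hg0 hgα hgmul hsum hdef hα hη hcη hη12
  refine ⟨invMulSubgroup B hdoubling, B * B, ?_, hB.trans hBK, ?_⟩
  · rw [invMulSubgroup_eq_inv_mul, inv_superlevel hginv, coe_mul]
  have hdefK := mul_sum_sub_le_of_subset_superlevel hg0 hgα hdef hα
    (superlevel_mul_superlevel_subset hgmul η)
  have hsplit : ∑ h ∈ B * B, g h + ∑ h ∈ B * B, (α - g h) = #(B * B) * α := by
    rw [← sum_add_distrib]; simp
  have hK0 : 0 ≤ ∑ h ∈ B * B, (α - g h) := sum_nonneg fun x _ => sub_nonneg.2 (hgα x)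
  have hdefK' : ∑ h ∈ B * B, (α - g h) ≤ η * α ^ 2 / 10 := by nlinarith
  have hKα : 11 / 12 * α ≤ #(B * B) := by nlinarith
  nlinarith [mul_le_mul_of_nonneg_left hKα (by positivity : 0 ≤ 2 * η * α)]

end Superlevel

section Convolution

variable [Group G] [DecidableEq G]

theorem Finset.sum_convolution [Fintype G] (A B : Finset G) :
    ∑ x, A.convolution B x = #A * #B := by
  rw [← card_product, card_eq_sum_card_fiberwise (f := fun ab => ab.1 * ab.2) (t := univ)
    fun _ _ => mem_univ _]
  rfl

theorem Finset.sum_convolution_inv_self [Fintype G] (s : Finset G) :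
    ∑ x, s.convolution s⁻¹ x = #s ^ 2 := by
  rw [sum_convolution, card_inv, sq]

theorem Finset.convolution_inv_self_inv (s : Finset G) (x : G) :
    s.convolution s⁻¹ x⁻¹ = s.convolution s⁻¹ x := by
  rw [convolution_inv, inv_inv]

theorem Finset.convolution_inv_self_add_le (s : Finset G) (x y : G) :
    s.convolution s⁻¹ x + s.convolution s⁻¹ y ≤ #s + s.convolution s⁻¹ (x * y) := by
  simp only [← card_inter_smul]
  calc #(s ∩ x • s) + #(s ∩ y • s) = #(s ∩ x • s) + #(x • s ∩ (x * y) • s) := by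
        rw [← smul_smul, ← smul_finset_inter, card_smul_finset]
    _ = #(s ∩ x • s ∪ x • s ∩ (x * y) • s) + #(s ∩ x • s ∩ (x • s ∩ (x * y) • s)) :=
        (card_union_add_card_inter (s ∩ x • s) (x • s ∩ (x * y) • s)).symm
    _ ≤ #(x • s) + #(s ∩ (x * y) • s) := add_le_add
        (card_le_card (union_subset inter_subset_right inter_subset_left))
        (card_le_card (inter_subset_inter inter_subset_left inter_subset_right))
    _ = #s + #(s ∩ (x * y) • s) := by rw [card_smul_finset]

theorem Finset.card_inter_op_smul (s K : Finset G) (x : G) :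
    #(s ∩ op x • K) = #{h ∈ K | h * x ∈ s} := by
  rw [← card_smul_finset (op x)⁻¹, smul_finset_inter, inv_smul_smul, inter_comm]
  congr 1
  ext h
  simp [mem_inv_smul_finset_iff]

theorem Finset.sum_card_inter_op_smul (s K : Finset G) :
    ∑ x ∈ s, #(s ∩ op x • K) = ∑ h ∈ K, s.convolution s⁻¹ h := calc
  _ = ∑ h ∈ K, #(s ∩ h⁻¹ • s) := by
    simp only [card_inter_op_smul]
    refine (sum_card_bipartiteAbove_eq_sum_card_bipartiteBelow (fun x h => h * x ∈ s)).trans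
      (sum_congr rfl fun h _ => congrArg card ?_)
    ext x
    simp [mem_inv_smul_finset_iff]
  _ = ∑ h ∈ K, s.convolution s⁻¹ h := by simp only [card_inter_smul, convolution_inv_self_inv]

end Convolution

theorem density_coe [Fintype G] (t : Finset G) :
    density (t : Set G) = #t / Fintype.card G := by
  rw [density, Nat.card_coe_set_eq, Set.ncard_coe_finset]

section Energy

variable [Group G] [Fintype G] [DecidableEq G]

theorem convR_indR_coe (s t : Finset G) (x : G) :
    convR (indR (s : Set G)) (indR (t : Set G)) x = s.convolution t x / Fintype.card G := by
  have hprod : ∀ y, indR (s : Set G) y * indR (t : Set G) (y⁻¹ * x) =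
      if y ∈ s ∩ x • t⁻¹ then 1 else 0 := fun y => by
    simp only [indR, Set.indicator_apply, mem_coe, Pi.one_apply, mul_ite, mul_one, mul_zero,
      mem_inter, ← inv_smul_mem_iff, smul_eq_mul, mem_inv', mul_inv_rev, inv_inv]
    by_cases hy : y ∈ s <;> simp [hy]
  rw [convR, ← card_inter_smul_inv]
  simp only [hprod, sum_boole, filter_mem_eq_inter, univ_inter]
  ring

theorem sum_convolution_mul_sub_le_of_energy (s : Finset G) {c : ℝ}
    (hE : (1 - c) * density (s : Set G) ^ 3 ≤ (Fintype.card G : ℝ)⁻¹ *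
      ∑ x, convR (indR (s : Set G)) (indR (s : Set G)⁻¹) x ^ 2) :
    ∑ x, (s.convolution s⁻¹ x : ℝ) * (#s - s.convolution s⁻¹ x) ≤ c * #s ^ 3 := by
  set N : ℝ := (Fintype.card G : ℝ)
  have hN : 0 < N := Nat.cast_pos.2 Fintype.card_pos
  rw [← coe_inv, density_coe] at hE
  simp only [convR_indR_coe] at hE
  have hnorm : N⁻¹ * ∑ x, ((s.convolution s⁻¹ x : ℝ) / N) ^ 2 =
      (∑ x, (s.convolution s⁻¹ x : ℝ) ^ 2) / N ^ 3 := by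
    simp only [div_pow, ← sum_div]
    field_simp
  have hsq : (1 - c) * #s ^ 3 ≤ ∑ x, (s.convolution s⁻¹ x : ℝ) ^ 2 := by
    refine (div_le_div_iff_of_pos_right (pow_pos hN 3)).1 ?_
    rw [← hnorm]
    linarith [show (1 - c) * ((#s : ℝ) / N) ^ 3 = (1 - c) * #s ^ 3 / N ^ 3 by ring]
  have hsum : ∑ x, (s.convolution s⁻¹ x : ℝ) = #s ^ 2 := by
    exact_mod_cast sum_convolution_inv_self s
  calc ∑ x, (s.convolution s⁻¹ x : ℝ) * (#s - s.convolution s⁻¹ x)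
      = #s * ∑ x, (s.convolution s⁻¹ x : ℝ) - ∑ x, (s.convolution s⁻¹ x : ℝ) ^ 2 := by
        simp only [mul_sub, sum_sub_distrib, mul_sum, sq]
        congr 1; exact sum_congr rfl fun x _ => mul_comm _ _
    _ ≤ c * #s ^ 3 := by rw [hsum]; linarith

end Energy

theorem fournier_lemma_general {G : Type*} [Group G] [Fintype G]
    (A : Set G) (hA : A.Nonempty) (c : ℝ)
    (hEnergy : (1 - c) * density A ^ 3 ≤
      (Fintype.card G : ℝ)⁻¹ * ∑ x : G, (convR (indR A) (indR A⁻¹) x) ^ 2)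
    (η : ℝ) (hη0 : 0 < η) (hη1 : 12 * c ≤ η) (hη2 : η < 1 / 12) :
    ∃ (H : Subgroup G) (x : G),
      (1 - c * η⁻¹) * density A ≤ density (H : Set G) ∧
      (1 - 2 * η) * density (H : Set G) ≤
        density (A ∩ ((fun h => h * x) '' (H : Set G))) := by
  classical
  obtain ⟨s, rfl⟩ : ∃ s : Finset G, (s : Set G) = A := ⟨A.toFinset, A.coe_toFinset⟩
  have hs : s.Nonempty := coe_nonempty.1 hA
  obtain ⟨H, K, hHK, hK, hsumK⟩ := exists_subgroup_of_sum_mul_sub_le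
    (g := fun x => (s.convolution s⁻¹ x : ℝ)) (fun _ => Nat.cast_nonneg _)
    (fun _ => Nat.cast_le.2 convolution_le_card_left)
    (fun x => congrArg ((↑) : ℕ → ℝ) (convolution_inv_self_inv s x))
    (fun x y => by exact_mod_cast convolution_inv_self_add_le s x y)
    (by exact_mod_cast sum_convolution_inv_self s)
    (sum_convolution_mul_sub_le_of_energy s hEnergy) (Nat.cast_pos.2 hs.card_pos) hη0 hη1 hη2
  have hcosets : ∑ _x ∈ s, (1 - 2 * η) * (#K : ℝ) ≤ ∑ x ∈ s, (#(s ∩ op x • K) : ℝ) := by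
    rw [sum_const, nsmul_eq_mul, ← Nat.cast_sum, sum_card_inter_op_smul, Nat.cast_sum]
    linarith
  obtain ⟨x, -, hx⟩ := exists_le_of_sum_le hs hcosets
  have hcoset : (s : Set G) ∩ (fun h => h * x) '' (H : Set G) = ↑(s ∩ op x • K) := by
    rw [hHK, coe_inter, coe_smul_finset, ← Set.image_smul]
    rfl
  have hN : (0 : ℝ) ≤ Fintype.card G := Nat.cast_nonneg _
  refine ⟨H, x, ?_, ?_⟩
  · rw [hHK, density_coe, density_coe, ← mul_div_assoc]
    exact div_le_div_of_nonneg_right hK hN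
  · rw [hcoset, hHK, density_coe, density_coe, ← mul_div_assoc]
    exact div_le_div_of_nonneg_right hx hN

/-- Fournier-type lemma: a set whose multiplicative energy is very close to maximal
is almost a coset of a subgroup. -/
theorem fournier_lemma {G : Type*} [Group G] [Fintype G]
    (A : Set G) (hA : A.Nonempty) (c : ℝ) (hc0 : 0 ≤ c) (hc1 : c ≤ 1)
    (hEnergy : (1 - c) * density A ^ 3 ≤
      (Fintype.card G : ℝ)⁻¹ * ∑ x : G, (convR (indR A) (indR A⁻¹) x) ^ 2)
    (η : ℝ) (hη0 : 0 < η) (hη1 : 12 * c ≤ η) (hη2 : η < 1 / 12) :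
    ∃ (H : Subgroup G) (x : G),
      (1 - c * η⁻¹) * density A ≤ density (H : Set G) ∧
      (1 - 2 * η) * density (H : Set G) ≤
        density (A ∩ ((fun h => h * x) '' (H : Set G))) :=
  fournier_lemma_general A hA c hEnergy η hη0 hη1 hη2
end
end

section
/- Largeness of symmetry sets: Suppose that G is a finite group, A ⊆ G is nonempty with ‖1_A∗1_{A⁻¹}‖²_{L²(μ_G)} ≥ c·μ_G(A)³ for some c ∈ [0,1], and δ ∈ (0,1]. Then min{ μ_G(A·A⁻¹), δ⁻¹·μ_G(A) } ≥ μ_G(Sym_δ(A)) ≥ (c − δ)·μ_G(A). -/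
open scoped BigOperators Pointwise

noncomputable section

variable {G : Type*}

/-! The function `f = 1_A ∗ 1_{A⁻¹}` takes values in `[0, μ(A)]`, has mean `μ(A)²` and is
supported on `A·A⁻¹`. Markov's inequality at the threshold `δ·μ(A)` gives
`δ·μ(A)·μ(Sym_δ(A)) ≤ μ(A)²`. Bounding `f² ≤ μ(A)²` on `Sym_δ(A)` and `f² ≤ δ·μ(A)·f` off it gives
`c·μ(A)³ ≤ 𝔼 f² ≤ μ(Sym_δ(A))·μ(A)² + δ·μ(A)³`. -/

open Finset

namespace Finset

variable {ι : Type*} (s : Finset ι) (f : ι → ℝ) {t : ℝ}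

theorem mul_card_filter_le_sum (hf : ∀ x ∈ s, 0 ≤ f x) :
    t * #{x ∈ s | t ≤ f x} ≤ ∑ x ∈ s, f x :=
  calc t * #{x ∈ s | t ≤ f x} = ∑ _x ∈ s with t ≤ f _x, t := by
        rw [sum_const, nsmul_eq_mul, mul_comm]
    _ ≤ ∑ x ∈ s with t ≤ f x, f x := sum_le_sum fun x hx => (mem_filter.1 hx).2
    _ ≤ ∑ x ∈ s, f x :=
        sum_le_sum_of_subset_of_nonneg (filter_subset _ _) fun x hx _ => hf x hx

theorem sum_sq_le_card_filter_mul_sq_add {M : ℝ} (ht : 0 ≤ t) (hf0 : ∀ x ∈ s, 0 ≤ f x)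
    (hfM : ∀ x ∈ s, f x ≤ M) :
    ∑ x ∈ s, f x ^ 2 ≤ #{x ∈ s | t ≤ f x} * M ^ 2 + t * ∑ x ∈ s, f x :=
  calc ∑ x ∈ s, f x ^ 2 ≤ ∑ x ∈ s, ((if t ≤ f x then M ^ 2 else 0) + t * f x) :=
        sum_le_sum fun x hx => by
          have := hf0 x hx
          split_ifs with h
          · nlinarith [hfM x hx]
          · nlinarith
    _ = _ := by rw [sum_add_distrib, ← sum_filter, sum_const, nsmul_eq_mul, mul_sum]

end Finset

theorem indR_nonneg (A : Set G) : 0 ≤ indR A :=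
  Set.indicator_nonneg fun _ _ => zero_le_one

theorem indR_le_one (A : Set G) (x : G) : indR A x ≤ 1 :=
  Set.indicator_le_self' (fun _ _ => zero_le_one) x

section Fintype

variable [Fintype G]

theorem density_eq_card_filter (p : G → Prop) [DecidablePred p] :
    density {x | p x} = #{x | p x} / Fintype.card G := by
  rw [density, Nat.card_eq_card_toFinset, Set.toFinset_ofPred]

theorem density_mono {S T : Set G} (h : S ⊆ T) : density S ≤ density T := by
  unfold density
  gcongr
  exact Nat.card_mono (Set.toFinite T) h

theorem density_pos {A : Set G} (hA : A.Nonempty) : 0 < density A := by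
  have : Nonempty A := hA.to_subtype
  have : Nonempty G := ⟨hA.some⟩
  exact div_pos (Nat.cast_pos.2 Nat.card_pos) (Nat.cast_pos.2 Fintype.card_pos)

theorem mean_indR (A : Set G) : (Fintype.card G : ℝ)⁻¹ * ∑ x, indR A x = density A := by
  classical
  simp [indR, Set.indicator_apply, density, div_eq_inv_mul]

end Fintype

section Group

variable [Group G] [Fintype G]

theorem density_inv (A : Set G) : density A⁻¹ = density A := by
  simp [density]

theorem convR_nonneg {f g : G → ℝ} (hf : 0 ≤ f) (hg : 0 ≤ g) (x : G) : 0 ≤ convR f g x :=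
  mul_nonneg (by positivity) (sum_nonneg fun y _ => mul_nonneg (hf y) (hg _))

theorem mean_convR (f g : G → ℝ) :
    (Fintype.card G : ℝ)⁻¹ * ∑ x, convR f g x =
      ((Fintype.card G : ℝ)⁻¹ * ∑ x, f x) * ((Fintype.card G : ℝ)⁻¹ * ∑ x, g x) := by
  have shift (y : G) : ∑ x, g (y⁻¹ * x) = ∑ x, g x := Equiv.sum_comp (Equiv.mulLeft y⁻¹) g
  simp only [convR, ← mul_sum]
  rw [sum_comm]
  simp only [← mul_sum, shift, ← sum_mul]
  ring

theorem convR_indR_le_density (A B : Set G) (x : G) : convR (indR A) (indR B) x ≤ density A := by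
  rw [← mean_indR, convR]
  gcongr with y
  exact mul_le_of_le_one_right (indR_nonneg A y) (indR_le_one B _)

theorem convR_indR_eq_zero_of_notMem_mul {A B : Set G} {x : G} (hx : x ∉ A * B) :
    convR (indR A) (indR B) x = 0 := by
  refine mul_eq_zero_of_right _ (sum_eq_zero fun y _ => ?_)
  by_cases hy : y ∈ A
  · have : y⁻¹ * x ∉ B := fun h => hx ⟨y, hy, y⁻¹ * x, h, mul_inv_cancel_left y x⟩
    simp [indR, this]
  · simp [indR, hy]

theorem mean_convR_indR_inv (A : Set G) :
    (Fintype.card G : ℝ)⁻¹ * ∑ x, convR (indR A) (indR A⁻¹) x = density A ^ 2 := by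
  rw [mean_convR, mean_indR, mean_indR, density_inv, sq]

theorem symmSet_subset_mul_inv {A : Set G} (hA : A.Nonempty) {δ : ℝ} (hδ : 0 < δ) :
    symmSet A δ ⊆ A * A⁻¹ := fun x hx => by
  by_contra hxA
  have : δ * density A ≤ 0 := convR_indR_eq_zero_of_notMem_mul hxA ▸ hx
  exact (mul_pos hδ (density_pos hA)).not_ge this

theorem mul_density_symmSet_le (A : Set G) (δ : ℝ) :
    δ * density A * density (symmSet A δ) ≤ density A ^ 2 := by
  classical
  rw [symmSet, density_eq_card_filter, ← mean_convR_indR_inv, mul_div_assoc', div_eq_inv_mul]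
  gcongr
  exact mul_card_filter_le_sum _ _ fun x _ => convR_nonneg (indR_nonneg A) (indR_nonneg _) x

theorem mean_sq_convR_indR_inv_le (A : Set G) {δ : ℝ} (hδ : 0 ≤ δ) :
    (Fintype.card G : ℝ)⁻¹ * ∑ x, convR (indR A) (indR A⁻¹) x ^ 2 ≤
      density (symmSet A δ) * density A ^ 2 + δ * density A ^ 3 := by
  classical
  have hsum := sum_sq_le_card_filter_mul_sq_add univ (convR (indR A) (indR A⁻¹))
    (t := δ * density A) (by unfold density; positivity)
    (fun x _ => convR_nonneg (indR_nonneg A) (indR_nonneg _) x)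
    (fun x _ => convR_indR_le_density A _ x)
  calc _ ≤ (Fintype.card G : ℝ)⁻¹ * (#{x | δ * density A ≤ convR (indR A) (indR A⁻¹) x} *
          density A ^ 2 + δ * density A * ∑ x, convR (indR A) (indR A⁻¹) x) :=
        mul_le_mul_of_nonneg_left hsum (by positivity)
    _ = density (symmSet A δ) * density A ^ 2 +
          δ * density A * ((Fintype.card G : ℝ)⁻¹ * ∑ x, convR (indR A) (indR A⁻¹) x) := by
        rw [symmSet, density_eq_card_filter]
        ring
    _ = _ := by
        rw [mean_convR_indR_inv]
        ring

end Group

theorem symmSet_largeness_general {G : Type*} [Group G] [Fintype G]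
    (A : Set G) (hA : A.Nonempty) (c : ℝ)
    (hEnergy : c * density A ^ 3 ≤
      (Fintype.card G : ℝ)⁻¹ * ∑ x : G, (convR (indR A) (indR A⁻¹) x) ^ 2)
    (δ : ℝ) (hδ0 : 0 < δ) :
    (c - δ) * density A ≤ density (symmSet A δ) ∧
    density (symmSet A δ) ≤ min (density (A * A⁻¹)) (δ⁻¹ * density A) := by
  have hA_pos := density_pos hA
  refine ⟨?_, le_min (density_mono (symmSet_subset_mul_inv hA hδ0)) ?_⟩
  · have h := hEnergy.trans (mean_sq_convR_indR_inv_le A hδ0.le)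
    refine le_of_mul_le_mul_right ?_ (pow_pos hA_pos 2)
    linear_combination h
  · rw [inv_mul_eq_div, le_div_iff₀ hδ0]
    refine le_of_mul_le_mul_left ?_ hA_pos
    linear_combination mul_density_symmSet_le A δ

/-- Largeness of symmetry sets: if `A` has multiplicative energy at least
`c·μ_G(A)³` then `min{μ_G(A·A⁻¹), δ⁻¹·μ_G(A)} ≥ μ_G(Sym_δ(A)) ≥ (c−δ)·μ_G(A)`. -/
theorem symmSet_largeness {G : Type*} [Group G] [Fintype G]
    (A : Set G) (hA : A.Nonempty) (c : ℝ) (hc0 : 0 ≤ c) (hc1 : c ≤ 1)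
    (hEnergy : c * density A ^ 3 ≤
      (Fintype.card G : ℝ)⁻¹ * ∑ x : G, (convR (indR A) (indR A⁻¹) x) ^ 2)
    (δ : ℝ) (hδ0 : 0 < δ) (hδ1 : δ ≤ 1) :
    (c - δ) * density A ≤ density (symmSet A δ) ∧
    density (symmSet A δ) ≤ min (density (A * A⁻¹)) (δ⁻¹ * density A) :=
  symmSet_largeness_general A hA c hEnergy δ hδ0
end
end

section
/- Weak Freiman-type theorem (containment form): There exist absolute constants C₁, C₂ ≥ 1 such that for every K ≥ 1, every r ∈ ℕ and every ε ∈ (0,1] there is a constant c > 0, depending only on K, r and ε, with the following property. Suppose that G is a finite group and A ⊆ G is nonempty and symmetric (A⁻¹ = A) with μ_G(A²) ≤ K·μ_G(A). Then there is an ε-closed, c-thick, r-multiplicative pair (B, B′) in G such that B ⊆ A⁴ and μ_G(B) ≥ C₁⁻¹·K^{−C₂}·μ_G(A). -/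
open scoped BigOperators Pointwise

noncomputable section

variable {G : Type*}

universe u

/-! Let `F = 1_A ∗ 1_{A²} ∗ 1_A`. It is symmetric, supported on `A⁴`, has total mass
`|A|²|A²| ≤ K|A|³`, is at least `|A|²` at the identity, and is at least `|A|²/(2K)` on the popular
products of `A`, of which there are at least `|A|/2`.

Sampling `m + 1 ≈ K/δ²` elements of `A` approximates `1_A ∗ 1_{A²}` in `L²` by an average of
translates of `1_{A²}`; two good samples differing by a left translation `t` show that `t` moves
`F` by at most `δ|A|²` everywhere (Croot–Sisask). Pigeonholing the samples by their consecutive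
quotients, which lie in `A²`, gives at least `|A|/(2K^m)` such almost periods; they form `B′`.

A product of `r` almost periods on either side moves `F` by at most `2rδ|A|²`, so superlevel sets
of `F` at thresholds `η|A|² ≥ 2rδ|A|²` apart are nested under `x ↦ B′^r x B′^r`. All those above
`|A|²/(4K)` have size at most `4K²|A|`, so among `N ≈ 16K²/ε` consecutive ones there are three
whose outer annulus has size at most `ε|A|/2`; the middle one is `B`. -/

namespace WeakFreiman

open Finset

section Sampling

variable {β X : Type*} [Fintype β] [Fintype X]

def sqNorm (f : X → ℝ) : ℝ := ∑ x, f x ^ 2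

lemma sqNorm_nonneg (f : X → ℝ) : 0 ≤ sqNorm f :=
  sum_nonneg fun _ _ => sq_nonneg _

lemma sqNorm_add_le (f g : X → ℝ) : sqNorm (f + g) ≤ 2 * sqNorm f + 2 * sqNorm g := by
  simp only [sqNorm, mul_sum, ← sum_add_distrib, Pi.add_apply]
  exact sum_le_sum fun x _ => by nlinarith [sq_nonneg (f x - g x)]

lemma sqNorm_sub_comm (f g : X → ℝ) : sqNorm (f - g) = sqNorm (g - f) := by
  simp only [sqNorm, Pi.sub_apply]
  exact sum_congr rfl fun x _ => by ring

lemma sum_sq_sum_fin_succ {w : β → ℝ} (hw : ∑ b, w b = 0) (n : ℕ) :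
    ∑ Y : Fin (n + 1) → β, (∑ i, w (Y i)) ^ 2 =
      Fintype.card β ^ n * ∑ b, w b ^ 2 + Fintype.card β * ∑ Y : Fin n → β, (∑ i, w (Y i)) ^ 2 := by
  rw [← (Fin.consEquiv fun _ => β).sum_comp, Fintype.sum_prod_type]
  simp only [Fin.consEquiv_apply, Fin.sum_univ_succ, Fin.cons_zero, Fin.cons_succ, add_sq,
    sum_add_distrib, ← sum_mul, ← mul_sum, hw, sum_const, card_univ, Fintype.card_fun,
    Fintype.card_fin, nsmul_eq_mul]
  push_cast
  ring

lemma sum_sq_sum_fin {w : β → ℝ} (hw : ∑ b, w b = 0) (n : ℕ) :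
    ∑ Y : Fin (n + 1) → β, (∑ i, w (Y i)) ^ 2 = (n + 1) * Fintype.card β ^ n * ∑ b, w b ^ 2 := by
  induction n with
  | zero => rw [sum_sq_sum_fin_succ hw 0]; simp
  | succ n ih =>
    rw [sum_sq_sum_fin_succ hw, ih]
    push_cast
    ring

lemma sum_sub_mean_eq_zero (v : β → ℝ) :
    ∑ b, (v b - (Fintype.card β : ℝ)⁻¹ * ∑ b, v b) = 0 := by
  rcases isEmpty_or_nonempty β with hβ | hβ
  · simp
  · rw [sum_sub_distrib, sum_const, card_univ, nsmul_eq_mul, mul_inv_cancel_left₀ (by positivity)]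
    exact sub_self _

lemma sum_sq_sub_mean_le (v : β → ℝ) :
    ∑ b, (v b - (Fintype.card β : ℝ)⁻¹ * ∑ b, v b) ^ 2 ≤ ∑ b, v b ^ 2 := by
  set μ := (Fintype.card β : ℝ)⁻¹ * ∑ b, v b with hμ
  -- the cross term vanishes because the deviations from the mean sum to zero
  have h : ∑ b, (v b - μ) ^ 2 = ∑ b, v b ^ 2 - μ * ∑ b, v b := by
    have e : ∀ b, (v b - μ) ^ 2 = (v b - μ) * v b - μ * (v b - μ) := fun b => by ring
    rw [sum_congr rfl fun b _ => e b, sum_sub_distrib, ← mul_sum, sum_sub_mean_eq_zero v,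
      mul_zero, sub_zero]
    simp only [sub_mul, sum_sub_distrib, ← mul_sum, sq]
  have : 0 ≤ μ * ∑ b, v b := by
    rw [hμ, mul_assoc, ← sq]; positivity
  linarith

def sampleMean (φ : β → X → ℝ) {n : ℕ} (Y : Fin n → β) : X → ℝ :=
  fun x => (n : ℝ)⁻¹ * ∑ i, φ (Y i) x

def mean (φ : β → X → ℝ) : X → ℝ :=
  fun x => (Fintype.card β : ℝ)⁻¹ * ∑ b, φ b x

theorem sum_sqNorm_sampleMean_sub_mean_le (φ : β → X → ℝ) (m : ℕ) :
    ∑ Y : Fin (m + 1) → β, sqNorm (sampleMean φ Y - mean φ) ≤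
      Fintype.card β ^ m / (m + 1) * ∑ b, sqNorm (φ b) := by
  set w : X → β → ℝ := fun x b => φ b x - mean φ x
  have hw : ∀ Y : Fin (m + 1) → β, ∀ x,
      (sampleMean φ Y - mean φ) x = ((m : ℝ) + 1)⁻¹ * ∑ i, w x (Y i) := by
    intro Y x
    simp only [w, Pi.sub_apply, sampleMean, sum_sub_distrib, sum_const, card_univ,
      Fintype.card_fin, nsmul_eq_mul]
    push_cast
    field_simp
  calc ∑ Y : Fin (m + 1) → β, sqNorm (sampleMean φ Y - mean φ)
      = ∑ x, ((m : ℝ) + 1)⁻¹ ^ 2 * ∑ Y : Fin (m + 1) → β, (∑ i, w x (Y i)) ^ 2 := by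
        simp only [sqNorm, hw, mul_pow, ← mul_sum]
        rw [Finset.sum_comm]
    _ = ∑ x : X, ((m : ℝ) + 1)⁻¹ * (Fintype.card β : ℝ) ^ m * ∑ b, w x b ^ 2 := by
        refine sum_congr rfl fun x _ => ?_
        rw [sum_sq_sum_fin (w := w x) (sum_sub_mean_eq_zero fun b => φ b x)]
        field_simp
    _ ≤ ∑ x : X, ((m : ℝ) + 1)⁻¹ * (Fintype.card β : ℝ) ^ m * ∑ b, φ b x ^ 2 := by
        refine sum_le_sum fun x _ => mul_le_mul_of_nonneg_left ?_ (by positivity)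
        exact sum_sq_sub_mean_le fun b => φ b x
    _ = _ := by
        simp only [sqNorm, ← mul_sum]
        rw [Finset.sum_comm]
        ring

end Sampling

section Counting

variable {α : Type*}

lemma card_le_two_mul_card_filter_le {s : Finset α} {f : α → ℝ} {v : ℝ}
    (hf : ∀ x ∈ s, 0 ≤ f x) (hv : 0 ≤ v) (hsum : ∑ x ∈ s, f x ≤ #s * v / 2) :
    (#s : ℝ) ≤ 2 * #{x ∈ s | f x ≤ v} := by
  rcases hv.eq_or_lt with rfl | hv
  · have hzero := (sum_eq_zero_iff_of_nonneg hf).mp (le_antisymm (by simpa using hsum)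
      (sum_nonneg hf))
    rw [filter_true_of_mem fun x hx => (hzero x hx).le]
    linarith [(#s).cast_nonneg (α := ℝ)]
  · have hbad : #{x ∈ s | ¬ f x ≤ v} * v ≤ ∑ x ∈ s, f x := by
      rw [← nsmul_eq_mul]
      refine (card_nsmul_le_sum _ _ _ fun x hx => (not_le.mp (mem_filter.mp hx).2).le).trans ?_
      exact sum_le_sum_of_subset_of_nonneg (filter_subset _ _) fun x hx _ => hf x hx
    have hsplit : (#{x ∈ s | f x ≤ v} : ℝ) + #{x ∈ s | ¬ f x ≤ v} = #s := by
      exact_mod_cast card_filter_add_card_filter_not _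
    nlinarith

lemma exists_card_sdiff_le [DecidableEq α] {B : ℕ → Finset α} (hB : Monotone B) {n : ℕ}
    (hn : 0 < n) {M : ℝ} (hM : (#(B (n + 1)) : ℝ) ≤ M) :
    ∃ l < n, (#(B (l + 2) \ B l) : ℝ) ≤ 2 * M / n := by
  set b : ℕ → ℝ := fun j => #(B j)
  have hsdiff : ∀ l, (#(B (l + 2) \ B l) : ℝ) = (b (l + 2) - b (l + 1)) + (b (l + 1) - b l) := by
    intro l
    simp only [b, card_sdiff_of_subset (hB (by omega : l ≤ l + 2))]
    rw [Nat.cast_sub (card_le_card (hB (by omega)))]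
    ring
  have htel : ∑ l ∈ range n, (#(B (l + 2) \ B l) : ℝ) ≤ ∑ l ∈ range n, 2 * M / n := by
    simp only [hsdiff, sum_add_distrib, sum_range_sub (fun j => b (j + 1)),
      sum_range_sub b, sum_const, card_range, nsmul_eq_mul]
    have hmono : ∀ i j, i ≤ j → b i ≤ b j := fun i j h => by
      simp only [b]; exact_mod_cast card_le_card (hB h)
    have := hmono n (n + 1) (by omega)
    have := hmono 0 1 (by omega)
    have : (0 : ℝ) ≤ b 0 := Nat.cast_nonneg _
    field_simp
    linarith
  obtain ⟨l, hl, hle⟩ := exists_le_of_sum_le (nonempty_range_iff.mpr hn.ne') htel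
  exact ⟨l, mem_range.mp hl, hle⟩

lemma sum_le_card_filter_mul_add [Fintype α] {g : α → ℝ} {M θ : ℝ} (s : Finset α)
    (hM : ∀ x, g x ≤ M) (hθ : 0 ≤ θ) (hs : ∀ x ∉ s, g x = 0) :
    ∑ x, g x ≤ #{x | θ ≤ g x} * M + #s * θ := by
  classical
  rw [← sum_filter_add_sum_filter_not univ (fun x => θ ≤ g x)]
  gcongr
  · rw [← nsmul_eq_mul]
    exact sum_le_card_nsmul _ g M fun x _ => hM x
  · rw [sum_filter]
    calc _ ≤ ∑ x, if x ∈ s then θ else 0 := sum_le_sum fun x _ => by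
          split_ifs with hθx hx hx
          · exact hθ
          · exact le_rfl
          · exact (not_le.mp hθx).le
          · exact (hs x hx).le
      _ = #s * θ := by rw [sum_ite_mem, univ_inter, sum_const, nsmul_eq_mul]

end Counting

section Convolution

variable [Group G] [Fintype G]

-- Unlike `convR`, not normalised by `|G|`.
def conv (f g : G → ℝ) : G → ℝ := fun x => ∑ y, f y * g (y⁻¹ * x)

lemma sqNorm_comp_mul_left (f : G → ℝ) (t : G) : sqNorm (fun x => f (t * x)) = sqNorm f :=
  Equiv.sum_comp (Equiv.mulLeft t) (f · ^ 2)

lemma sqNorm_translate_sub_le {μ g g' : G → ℝ} {t : G} (h : ∀ x, g' x = g (t * x)) :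
    sqNorm (fun x => μ (t * x) - μ x) ≤ 2 * sqNorm (g - μ) + 2 * sqNorm (g' - μ) := by
  have hsplit : (fun x => μ (t * x) - μ x) = (fun x => (μ - g) (t * x)) + (g' - μ) := by
    funext x; simp only [Pi.add_apply, Pi.sub_apply, h]; ring
  rw [hsplit, sqNorm_sub_comm g μ, ← sqNorm_comp_mul_left (μ - g) t]
  exact sqNorm_add_le _ _

lemma conv_nonneg {f g : G → ℝ} (hf : 0 ≤ f) (hg : 0 ≤ g) (x : G) : 0 ≤ conv f g x :=
  sum_nonneg fun y _ => mul_nonneg (hf y) (hg _)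

lemma sum_conv (f g : G → ℝ) : ∑ x, conv f g x = (∑ y, f y) * ∑ z, g z := by
  simp only [conv, sum_mul]
  rw [Finset.sum_comm]
  refine sum_congr rfl fun y _ => ?_
  rw [← mul_sum]
  exact congrArg _ (Equiv.sum_comp (Equiv.mulLeft y⁻¹) g)

lemma support_conv_subset (f g : G → ℝ) :
    Function.support (conv f g) ⊆ Function.support f * Function.support g := by
  intro x hx
  obtain ⟨y, -, hy⟩ := exists_ne_zero_of_sum_ne_zero hx
  exact ⟨y, left_ne_zero_of_mul hy, y⁻¹ * x, right_ne_zero_of_mul hy, mul_inv_cancel_left y x⟩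

lemma conv_assoc (f g h : G → ℝ) : conv (conv f g) h = conv f (conv g h) := by
  funext x
  simp only [conv, sum_mul, mul_sum]
  rw [Finset.sum_comm]
  refine sum_congr rfl fun z _ => ?_
  rw [← Equiv.sum_comp (Equiv.mulLeft z)]
  exact sum_congr rfl fun w _ => by simp [mul_assoc]

lemma conv_inv_apply (f g : G → ℝ) (x : G) :
    conv f g x⁻¹ = conv (fun y => g y⁻¹) (fun y => f y⁻¹) x := by
  simp only [conv]
  rw [← Equiv.sum_comp (Equiv.mulLeft x) (fun y => g y⁻¹ * f (y⁻¹ * x)⁻¹)]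
  exact sum_congr rfl fun u _ => by simp [mul_comm]

lemma conv_comp_mul_left (f g : G → ℝ) (t x : G) :
    conv (fun y => f (t * y)) g x = conv f g (t * x) := by
  simp only [conv]
  rw [← Equiv.sum_comp (Equiv.mulLeft t) (fun y => f y * g (y⁻¹ * (t * x)))]
  exact sum_congr rfl fun y _ => by simp [mul_assoc]

lemma conv_sub_left (f f' g : G → ℝ) (x : G) :
    conv (f - f') g x = conv f g x - conv f' g x := by
  simp only [conv, Pi.sub_apply, sub_mul, sum_sub_distrib]

lemma conv_le_conv_left {f f' g : G → ℝ} (hf : f ≤ f') (hg : 0 ≤ g) (x : G) :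
    conv f g x ≤ conv f' g x :=
  sum_le_sum fun y _ => mul_le_mul_of_nonneg_right (hf y) (hg _)

lemma sq_conv_le (f g : G → ℝ) (x : G) : conv f g x ^ 2 ≤ sqNorm f * sqNorm g := by
  refine (sum_mul_sq_le_sq_mul_sq univ f fun y => g (y⁻¹ * x)).trans_eq ?_
  congr 1
  exact Equiv.sum_comp ((Equiv.inv G).trans (Equiv.mulRight x)) (fun y => g y ^ 2)

end Convolution

section Indicator

variable [DecidableEq G]

def ind (S : Finset G) : G → ℝ := fun x => if x ∈ S then 1 else 0

lemma ind_nonneg (S : Finset G) : 0 ≤ ind S := by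
  intro x; unfold ind; split_ifs <;> norm_num

lemma support_ind (S : Finset G) : Function.support (ind S) = S := by
  ext x; simp [ind]

lemma ind_inv_apply [Group G] {S : Finset G} (hS : S⁻¹ = S) (x : G) : ind S x⁻¹ = ind S x := by
  conv_lhs => rw [← hS]
  simp [ind, mem_inv']

variable [Fintype G]

lemma sum_ind_mul (S : Finset G) (φ : G → ℝ) : ∑ y, ind S y * φ y = ∑ y ∈ S, φ y := by
  simp [ind, ite_mul, sum_ite_mem]

lemma sum_ind (S : Finset G) : ∑ y, ind S y = #S := by
  simpa using sum_ind_mul S 1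

lemma sqNorm_ind (S : Finset G) : sqNorm (ind S) = #S := by
  rw [← sum_ind]
  exact sum_congr rfl fun x _ => by unfold ind; split_ifs <;> norm_num

variable [Group G]

lemma conv_ind_left (A : Finset G) (f : G → ℝ) (x : G) :
    conv (ind A) f x = ∑ b : A, f ((b : G)⁻¹ * x) := by
  rw [conv, sum_ind_mul, sum_coe_sort A fun y => f (y⁻¹ * x)]

lemma conv_ind_ind_le_card (S T : Finset G) (x : G) : conv (ind S) (ind T) x ≤ #S := by
  rw [conv_ind_left, ← Fintype.card_coe S, ← nsmul_one, ← card_univ]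
  exact sum_le_card_nsmul _ _ _ fun b _ => by unfold ind; split_ifs <;> norm_num

lemma conv_ind_ind_one {S : Finset G} (hS : S⁻¹ = S) : conv (ind S) (ind S) 1 = #S := by
  rw [conv, ← sum_ind S]
  exact sum_congr rfl fun y _ => by
    rw [mul_one, ind_inv_apply hS]; unfold ind; split_ifs <;> norm_num

end Indicator

section AlmostPeriodicity

lemma eq_inv_mul_of_inv_mul_eq [Group G] {m : ℕ} {Z W : Fin (m + 1) → G}
    (h : ∀ j : Fin m, (Z 0)⁻¹ * Z j.succ = (W 0)⁻¹ * W j.succ) (i : Fin (m + 1)) :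
    Z i = (W 0 * (Z 0)⁻¹)⁻¹ * W i := by
  refine Fin.cases (by group) (fun j => ?_) i
  calc Z j.succ = Z 0 * ((Z 0)⁻¹ * Z j.succ) := by group
    _ = _ := by rw [h j]; group

variable [Group G] [DecidableEq G]

/-- Pigeonhole on the quotients `(Y 0)⁻¹ Y (j + 1)`: tuples sharing them are left translates of
each other. -/
lemma exists_translates_of_tuples {A : Finset G} {m : ℕ} (𝒢 : Finset (Fin (m + 1) → A)) :
    ∃ T : Finset G, (#𝒢 : ℝ) ≤ #(A⁻¹ * A) ^ m * #T ∧
      ∀ t ∈ T, ∃ W ∈ 𝒢, ∃ Z ∈ 𝒢, ∀ i, (Z i : G) = t⁻¹ * W i := by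
  rcases 𝒢.eq_empty_or_nonempty with rfl | ⟨Y₀, hY₀⟩
  · exact ⟨∅, by simp, by simp⟩
  set ψ : (Fin (m + 1) → A) → Fin m → G := fun Y j => ((Y 0 : G))⁻¹ * Y j.succ
  have hmaps : ∀ Y ∈ 𝒢, ψ Y ∈ Fintype.piFinset fun _ => A⁻¹ * A := fun Y _ =>
    Fintype.mem_piFinset.mpr fun j => mul_mem_mul (inv_mem_inv (Y 0).2) (Y j.succ).2
  have hpos : (0 : ℝ) < #(A⁻¹ * A) ^ m :=
    pow_pos (by exact_mod_cast card_pos.mpr ⟨_, mul_mem_mul (inv_mem_inv (Y₀ 0).2) (Y₀ 0).2⟩) m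
  obtain ⟨y, -, hy⟩ := exists_le_card_fiber_of_nsmul_le_card_of_maps_to hmaps
    (Fintype.piFinset_nonempty.mpr fun _ => ⟨_, mul_mem_mul (inv_mem_inv (Y₀ 0).2) (Y₀ 0).2⟩)
    (b := (#𝒢 : ℝ) / #(A⁻¹ * A) ^ m)
    (by rw [Fintype.card_piFinset_const, nsmul_eq_mul, Nat.cast_pow, mul_div_cancel₀ _ hpos.ne'])
  set fiber := {Y ∈ 𝒢 | ψ Y = y}
  have h𝒢 : (0 : ℝ) < #𝒢 := by exact_mod_cast card_pos.mpr ⟨Y₀, hY₀⟩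
  obtain ⟨W, hW⟩ : fiber.Nonempty :=
    card_pos.mp (by exact_mod_cast (div_pos h𝒢 hpos).trans_le hy)
  have hfiber : ∀ Z ∈ fiber, ∀ i, (Z i : G) = ((W 0 : G) * (Z 0 : G)⁻¹)⁻¹ * W i := by
    intro Z hZ
    refine eq_inv_mul_of_inv_mul_eq (Z := fun i => (Z i : G)) (W := fun i => (W i : G)) fun j => ?_
    exact congrFun ((mem_filter.mp hZ).2.trans (mem_filter.mp hW).2.symm) j
  refine ⟨fiber.image fun Z => (W 0 : G) * (Z 0 : G)⁻¹, ?_, ?_⟩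
  · rw [card_image_of_injOn fun Z hZ Z' hZ' h => funext fun i => Subtype.ext (by
      rw [hfiber Z hZ, hfiber Z' hZ', show (W 0 : G) * (Z 0 : G)⁻¹ = _ * _ from h])]
    rwa [div_le_iff₀' hpos] at hy
  · intro t ht
    obtain ⟨Z, hZ, rfl⟩ := mem_image.mp ht
    exact ⟨W, (mem_filter.mp hW).1, Z, (mem_filter.mp hZ).1, hfiber Z hZ⟩

variable [Fintype G]

theorem croot_sisask {A : Finset G} (hA : A.Nonempty) (f : G → ℝ) (m : ℕ) :
    ∃ T : Finset G, (#A : ℝ) ^ (m + 1) ≤ 2 * #(A⁻¹ * A) ^ m * #T ∧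
      ∀ t ∈ T, sqNorm (fun x => conv (ind A) f (t * x) - conv (ind A) f x) ≤
        8 * #A ^ 2 * sqNorm f / (m + 1) := by
  set φ : A → G → ℝ := fun b x => f ((b : G)⁻¹ * x)
  set v : ℝ := 2 * sqNorm f / (m + 1)
  have hconv : ∀ x, conv (ind A) f x = #A * mean φ x := fun x => by
    rw [conv_ind_left, mean, Fintype.card_coe, mul_inv_cancel_left₀ (by simpa using hA.ne_empty)]
  have hφ : ∑ b, sqNorm (φ b) = #A * sqNorm f := by
    rw [sum_congr rfl fun b _ => sqNorm_comp_mul_left f _, sum_const, card_univ,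
      Fintype.card_coe, nsmul_eq_mul]
  have hLLN := sum_sqNorm_sampleMean_sub_mean_le φ m
  rw [hφ, Fintype.card_coe] at hLLN
  obtain ⟨T, hT, hTpairs⟩ := exists_translates_of_tuples {Y | sqNorm (sampleMean φ Y - mean φ) ≤ v}
  have hgood := card_le_two_mul_card_filter_le (s := univ) (v := v) (fun Y _ => sqNorm_nonneg _)
    (by have := sqNorm_nonneg f; positivity) (hLLN.trans_eq (by
      simp only [v, card_univ, Fintype.card_fun, Fintype.card_coe, Fintype.card_fin]
      push_cast; field_simp; ring))
  simp only [card_univ, Fintype.card_fun, Fintype.card_coe, Fintype.card_fin] at hgood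
  push_cast at hgood
  refine ⟨T, hgood.trans (by rw [mul_assoc]; exact mul_le_mul_of_nonneg_left hT zero_le_two),
    fun t ht => ?_⟩
  obtain ⟨W, hW, Z, hZ, hZW⟩ := hTpairs t ht
  have hshift : ∀ x, sampleMean φ Z x = sampleMean φ W (t * x) := fun x => by
    simp only [sampleMean, φ, hZW, mul_inv_rev, inv_inv, mul_assoc]
  have hmean := sqNorm_translate_sub_le (μ := mean φ) hshift
  have hW' := (mem_filter.mp hW).2
  have hZ' := (mem_filter.mp hZ).2
  calc sqNorm (fun x => conv (ind A) f (t * x) - conv (ind A) f x)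
      = #A ^ 2 * sqNorm (fun x => mean φ (t * x) - mean φ x) := by
        simp only [sqNorm, hconv, mul_sum]
        exact sum_congr rfl fun x _ => by ring
    _ ≤ #A ^ 2 * (4 * v) := by gcongr; linarith
    _ = _ := by ring

end AlmostPeriodicity

section LevelSets

variable [Fintype G] {F : G → ℝ}

lemma density_coe (X : Finset G) : density (X : Set G) = #X / Fintype.card G := by
  rw [density, Nat.card_coe_set_eq, Set.ncard_coe_finset]

def superlevel (F : G → ℝ) (τ : ℝ) : Finset G := {x | τ ≤ F x}

lemma mem_superlevel {τ : ℝ} {x : G} : x ∈ superlevel F τ ↔ τ ≤ F x := by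
  simp [superlevel]

lemma superlevel_anti {τ τ' : ℝ} (h : τ' ≤ τ) : superlevel F τ ⊆ superlevel F τ' :=
  fun _ hx => mem_superlevel.mpr (h.trans (mem_superlevel.mp hx))

lemma card_superlevel_mul_le (hF : 0 ≤ F) (τ : ℝ) : #(superlevel F τ) * τ ≤ ∑ x, F x := by
  rw [← nsmul_eq_mul]
  exact (card_nsmul_le_sum _ F τ fun x hx => mem_superlevel.mp hx).trans
    (sum_le_sum_of_subset_of_nonneg (subset_univ _) fun x _ _ => hF x)

variable [Group G]

def almostPeriods (F : G → ℝ) (δ : ℝ) : Finset G := {s | ∀ x, |F (s * x) - F x| ≤ δ}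

lemma mem_almostPeriods {δ : ℝ} {s : G} :
    s ∈ almostPeriods F δ ↔ ∀ x, |F (s * x) - F x| ≤ δ := by
  simp [almostPeriods]

lemma one_mem_almostPeriods {δ : ℝ} (hδ : 0 ≤ δ) : (1 : G) ∈ almostPeriods F δ :=
  mem_almostPeriods.mpr fun x => by simpa using hδ

variable [DecidableEq G]

lemma inv_superlevel (hF : ∀ x, F x⁻¹ = F x) (τ : ℝ) : (superlevel F τ)⁻¹ = superlevel F τ := by
  ext x; simp [mem_inv', mem_superlevel, hF]

lemma inv_almostPeriods (δ : ℝ) : (almostPeriods F δ)⁻¹ = almostPeriods F δ := by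
  suffices h : ∀ s ∈ almostPeriods F δ, s⁻¹ ∈ almostPeriods F δ by
    ext s; exact ⟨fun hs => inv_inv s ▸ h _ (mem_inv'.mp hs), fun hs => mem_inv'.mpr (h s hs)⟩
  intro s hs
  refine mem_almostPeriods.mpr fun x => ?_
  simpa [abs_sub_comm] using mem_almostPeriods.mp hs (s⁻¹ * x)

lemma abs_sub_le_of_mem_pow {δ : ℝ} :
    ∀ n : ℕ, ∀ u ∈ almostPeriods F δ ^ n, ∀ x, |F (u * x) - F x| ≤ n * δ
  | 0, u, hu, x => by simp [mem_one.mp hu]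
  | n + 1, _, hsu, x => by
    obtain ⟨s, hs, u, hu, rfl⟩ := mem_mul.mp (pow_succ' (almostPeriods F δ) n ▸ hsu)
    have h₁ := mem_almostPeriods.mp hs (u * x)
    have h₂ := abs_sub_le_of_mem_pow n u hu x
    rw [mul_assoc]
    push_cast
    linarith [abs_sub_le (F (s * (u * x))) (F (u * x)) (F x)]

lemma abs_sub_le_of_mem_pow_right (hF : ∀ x, F x⁻¹ = F x) {δ : ℝ} (n : ℕ) {w : G}
    (hw : w ∈ almostPeriods F δ ^ n) (x : G) : |F (x * w) - F x| ≤ n * δ := by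
  have hw' : w⁻¹ ∈ almostPeriods F δ ^ n := by
    rwa [← inv_almostPeriods δ, inv_pow, mem_inv', inv_inv]
  have h := abs_sub_le_of_mem_pow n w⁻¹ hw' x⁻¹
  rwa [← mul_inv_rev, hF, hF] at h

lemma pow_mul_superlevel_mul_pow_subset (hF : ∀ x, F x⁻¹ = F x) {δ τ τ' : ℝ} {r : ℕ}
    (h : τ' + 2 * r * δ ≤ τ) :
    almostPeriods F δ ^ r * superlevel F τ * almostPeriods F δ ^ r ⊆ superlevel F τ' := by
  intro y hy
  obtain ⟨_, hux, w, hw, rfl⟩ := mem_mul.mp hy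
  obtain ⟨u, hu, x, hx, rfl⟩ := mem_mul.mp hux
  have h₁ := abs_sub_le_of_mem_pow r u hu (x * w)
  have h₂ := abs_sub_le_of_mem_pow_right hF r hw x
  rw [mem_superlevel] at hx ⊢
  rw [mul_assoc]
  linarith [(abs_le.mp h₁).1, (abs_le.mp h₂).1]

lemma coe_inv_superlevel (hF : ∀ x, F x⁻¹ = F x) (τ : ℝ) :
    (superlevel F τ : Set G)⁻¹ = superlevel F τ := by
  rw [← coe_inv, inv_superlevel hF]

/-- The witnesses are `B⁻ = {F ≥ τ}` and `B⁺ = {F ≥ τ - 2η}`: multiplying by `r` almost periods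
on each side moves `F` by at most `2rδ ≤ η`. -/
lemma isMultPair_superlevel (hF : ∀ x, F x⁻¹ = F x) {δ τ η ε c : ℝ} {r : ℕ} (hδ : 0 ≤ δ)
    (hη : 2 * r * δ ≤ η) (h1 : τ ≤ F 1)
    (hthin : (#(superlevel F (τ - 2 * η) \ superlevel F τ) : ℝ) ≤ ε * #(superlevel F (τ - η)))
    (hthick : c * #(superlevel F (τ - η)) ≤ #(almostPeriods F δ)) :
    IsMultPair (superlevel F (τ - η) : Set G) (almostPeriods F δ) r ε c := by
  have hη0 : 0 ≤ η := le_trans (by positivity) hη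
  have hmem : ∀ {τ'}, τ' ≤ τ → (1 : G) ∈ (superlevel F τ' : Set G) := fun h =>
    mem_coe.mpr (mem_superlevel.mpr (h.trans h1))
  have hN : (0 : ℝ) ≤ Fintype.card G := Nat.cast_nonneg _
  refine ⟨⟨hmem (by linarith), coe_inv_superlevel hF _⟩,
    ⟨mem_coe.mpr (one_mem_almostPeriods hδ), by rw [← coe_inv, inv_almostPeriods]⟩, ?_,
    superlevel F (τ - 2 * η), superlevel F τ, ⟨hmem (by linarith), coe_inv_superlevel hF _⟩,
    ⟨hmem le_rfl, coe_inv_superlevel hF _⟩, ?_, ?_, ?_⟩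
  · rw [density_coe, density_coe, ← mul_div_assoc]
    exact div_le_div_of_nonneg_right hthick hN
  · rw [← coe_pow, ← coe_mul, ← coe_mul, coe_subset]
    exact pow_mul_superlevel_mul_pow_subset hF (by linarith)
  · rw [← coe_pow, ← coe_mul, ← coe_mul, coe_subset]
    exact pow_mul_superlevel_mul_pow_subset hF (by linarith)
  · rw [← coe_sdiff, density_coe, density_coe, ← mul_div_assoc]
    exact div_le_div_of_nonneg_right hthin hN

end LevelSets

section TripleConvolution

variable [Group G] [Fintype G] [DecidableEq G] {A : Finset G} {K : ℝ}

def tripleConv (A : Finset G) : G → ℝ := conv (conv (ind A) (ind (A * A))) (ind A)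

lemma tripleConv_nonneg (A : Finset G) : 0 ≤ tripleConv A :=
  fun x => conv_nonneg (fun y => conv_nonneg (ind_nonneg _) (ind_nonneg _) y) (ind_nonneg _) x

lemma sum_tripleConv (A : Finset G) : ∑ x, tripleConv A x = #A ^ 2 * #(A * A) := by
  rw [tripleConv, sum_conv, sum_conv, sum_ind, sum_ind]; ring

lemma tripleConv_inv_apply (hA : A⁻¹ = A) (x : G) : tripleConv A x⁻¹ = tripleConv A x := by
  have h₁ : (fun y => ind A y⁻¹) = ind A := funext (ind_inv_apply hA)
  have h₂ : (fun y => ind (A * A) y⁻¹) = ind (A * A) :=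
    funext (ind_inv_apply (by rw [mul_inv_rev, hA]))
  simp only [tripleConv, conv_inv_apply, h₁, h₂]
  rw [conv_assoc]

lemma card_mul_ind_le_conv (hA : A⁻¹ = A) (y : G) :
    #A * ind A y ≤ conv (ind A) (ind (A * A)) y := by
  by_cases hy : y ∈ A
  · have hinv : ∀ a ∈ A, a⁻¹ ∈ A := fun a ha => by rw [← mem_inv', hA]; exact ha
    have h : ∀ b : A, ind (A * A) ((b : G)⁻¹ * y) = 1 := fun b =>
      if_pos (mul_mem_mul (hinv _ b.2) hy)
    rw [conv_ind_left, sum_congr rfl fun b _ => h b]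
    simp [ind, hy]
  · simpa [ind, hy] using conv_nonneg (ind_nonneg _) (ind_nonneg _) y

lemma card_mul_conv_le_tripleConv (hA : A⁻¹ = A) (x : G) :
    #A * conv (ind A) (ind A) x ≤ tripleConv A x := by
  calc #A * conv (ind A) (ind A) x = conv (fun y => #A * ind A y) (ind A) x := by
        simp only [conv, mul_sum, mul_assoc]
    _ ≤ tripleConv A x := conv_le_conv_left (card_mul_ind_le_conv hA) (ind_nonneg _) x

lemma sq_card_le_tripleConv_one (hA : A⁻¹ = A) : (#A : ℝ) ^ 2 ≤ tripleConv A 1 := by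
  simpa [conv_ind_ind_one hA, sq] using card_mul_conv_le_tripleConv hA 1

lemma support_tripleConv_subset (A : Finset G) :
    Function.support (tripleConv A) ⊆ ↑(A ^ 4) := by
  refine (support_conv_subset _ _).trans ?_
  refine (Set.mul_subset_mul_right (support_conv_subset _ _)).trans_eq ?_
  simp only [support_ind, coe_mul, pow_succ, pow_zero, one_mul, mul_assoc]

lemma card_le_two_mul_card_superlevel_tripleConv (hA : A.Nonempty) (hsym : A⁻¹ = A) (hK : 0 < K)
    (hdbl : (#(A * A) : ℝ) ≤ K * #A) :
    (#A : ℝ) ≤ 2 * #(superlevel (tripleConv A) ((#A : ℝ) ^ 2 / (2 * K))) := by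
  have ha : (0 : ℝ) < #A := by exact_mod_cast hA.card_pos
  have hsupp : ∀ x ∉ A * A, conv (ind A) (ind A) x = 0 := fun x hx => by
    by_contra h
    have := support_conv_subset (ind A) (ind A) h
    rw [support_ind, ← coe_mul] at this
    exact hx this
  have hpop := sum_le_card_filter_mul_add (A * A) (conv_ind_ind_le_card A A)
    (by positivity : (0 : ℝ) ≤ #A / (2 * K)) hsupp
  rw [sum_conv, sum_ind] at hpop
  have hsub : ({x | #A / (2 * K) ≤ conv (ind A) (ind A) x} : Finset G) ⊆
      superlevel (tripleConv A) ((#A : ℝ) ^ 2 / (2 * K)) := fun x hx => by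
    refine mem_superlevel.mpr (le_trans ?_ (card_mul_conv_le_tripleConv hsym x))
    rw [sq, mul_div_assoc]
    exact mul_le_mul_of_nonneg_left (mem_filter.mp hx).2 ha.le
  have hcard : (#{x | #A / (2 * K) ≤ conv (ind A) (ind A) x} : ℝ) ≤
      #(superlevel (tripleConv A) ((#A : ℝ) ^ 2 / (2 * K))) := by exact_mod_cast card_le_card hsub
  have hdbl' : (#(A * A) : ℝ) * (#A / (2 * K)) ≤ #A * #A / 2 := by
    calc (#(A * A) : ℝ) * (#A / (2 * K)) ≤ K * #A * (#A / (2 * K)) := by gcongr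
      _ = #A * #A / 2 := by field_simp
  nlinarith

lemma sq_tripleConv_mul_left_sub_le (A : Finset G) (t x : G) :
    (tripleConv A (t * x) - tripleConv A x) ^ 2 ≤
      sqNorm (fun y => conv (ind A) (ind (A * A)) (t * y) - conv (ind A) (ind (A * A)) y) * #A := by
  rw [tripleConv, ← conv_comp_mul_left, ← conv_sub_left, ← sqNorm_ind A]
  exact sq_conv_le _ _ x

lemma card_almostPeriods_tripleConv_ge (hA : A.Nonempty) (hsym : A⁻¹ = A) (hK : 0 < K)
    (hdbl : (#(A * A) : ℝ) ≤ K * #A) {δ : ℝ} (hδ : 0 ≤ δ) {m : ℕ}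
    (hm : 8 * K ≤ δ ^ 2 * (m + 1)) :
    #A / (2 * K ^ m) ≤ (#(almostPeriods (tripleConv A) (δ * #A ^ 2)) : ℝ) := by
  obtain ⟨T, hT, hTper⟩ := croot_sisask hA (ind (A * A)) m
  rw [hsym] at hT
  have ha : (0 : ℝ) < #A := by exact_mod_cast hA.card_pos
  set a : ℝ := (#A : ℝ)
  have hsub : T ⊆ almostPeriods (tripleConv A) (δ * a ^ 2) := fun t ht =>
    mem_almostPeriods.mpr fun x => by
      have hper := hTper t ht
      rw [sqNorm_ind] at hper
      refine abs_le_of_sq_le_sq ?_ (by positivity)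
      calc _ ≤ _ * a := sq_tripleConv_mul_left_sub_le A t x
        _ ≤ 8 * a ^ 2 * (K * a) / (m + 1) * a := by gcongr; exact hper.trans (by gcongr)
        _ = 8 * K / (m + 1) * a ^ 4 := by ring
        _ ≤ δ ^ 2 * a ^ 4 := by gcongr; rwa [div_le_iff₀ (by positivity)]
        _ = (δ * a ^ 2) ^ 2 := by ring
  have hTcard : a / (2 * K ^ m) ≤ #T := by
    rw [div_le_iff₀ (by positivity)]
    refine le_of_mul_le_mul_left ?_ (pow_pos ha m)
    calc a ^ m * a = a ^ (m + 1) := by ring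
      _ ≤ 2 * #(A * A) ^ m * #T := hT
      _ ≤ 2 * (K * a) ^ m * #T := by gcongr
      _ = a ^ m * (#T * (2 * K ^ m)) := by ring
  exact hTcard.trans (by exact_mod_cast card_le_card hsub)

end TripleConvolution

section MainArgument

variable [Group G] [Fintype G] [DecidableEq G] {A : Finset G} {K : ℝ}

lemma card_superlevel_tripleConv_le (hA : A.Nonempty) (hK : 0 < K)
    (hdbl : (#(A * A) : ℝ) ≤ K * #A) {τ : ℝ} (hτ : (#A : ℝ) ^ 2 / (4 * K) ≤ τ) :
    (#(superlevel (tripleConv A) τ) : ℝ) ≤ 4 * K ^ 2 * #A := by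
  have hM := card_superlevel_mul_le (tripleConv_nonneg A) τ
  rw [sum_tripleConv] at hM
  have : (#(superlevel (tripleConv A) τ) : ℝ) * (#A ^ 2 / (4 * K)) ≤ K * #A ^ 3 :=
    calc _ ≤ (#(superlevel (tripleConv A) τ) : ℝ) * τ := by gcongr
      _ ≤ #A ^ 2 * #(A * A) := hM
      _ ≤ #A ^ 2 * (K * #A) := by gcongr
      _ = K * #A ^ 3 := by ring
  rw [← le_div_iff₀ (by positivity)] at this
  exact this.trans_eq (by field_simp)

/-- Pigeonhole over the `N` annuli between the level sets at heights `|A|²/(2K) - j η`,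
`j ≤ N + 1`, all of size at most `4K²|A|`. -/
lemma exists_thin_annulus_tripleConv (hA : A.Nonempty) (hsym : A⁻¹ = A) (hK : 0 < K)
    (hdbl : (#(A * A) : ℝ) ≤ K * #A) {ε η : ℝ} {N : ℕ} (hN : 0 < N)
    (hNε : 16 * K ^ 2 ≤ ε * N) (hη : 0 ≤ η) (hNη : (N + 1) * η ≤ #A ^ 2 / (4 * K)) :
    ∃ τ ≤ (#A : ℝ) ^ 2 / (2 * K), 0 < τ - η ∧
      (#(superlevel (tripleConv A) (τ - 2 * η) \ superlevel (tripleConv A) τ) : ℝ) ≤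
        ε * #(superlevel (tripleConv A) (τ - η)) ∧
      (#A : ℝ) / 2 ≤ #(superlevel (tripleConv A) (τ - η)) ∧
      (#(superlevel (tripleConv A) (τ - η)) : ℝ) ≤ 4 * K ^ 2 * #A := by
  set τ₀ : ℝ := #A ^ 2 / (2 * K)
  set B : ℕ → Finset G := fun j => superlevel (tripleConv A) (τ₀ - j * η)
  have hmono : Monotone B := fun i j hij => superlevel_anti (by gcongr)
  have hlow : ∀ j ≤ N + 1, (#A : ℝ) ^ 2 / (4 * K) ≤ τ₀ - j * η := by
    intro j hj
    have : (j : ℝ) * η ≤ (N + 1) * η := by gcongr; exact_mod_cast hj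
    have : τ₀ = #A ^ 2 / (4 * K) + #A ^ 2 / (4 * K) := by simp only [τ₀]; field_simp; ring
    linarith
  have hcard : ∀ j ≤ N + 1, (#(B j) : ℝ) ≤ 4 * K ^ 2 * #A := fun j hj =>
    card_superlevel_tripleConv_le hA hK hdbl (hlow j hj)
  obtain ⟨l, hl, hthin⟩ := exists_card_sdiff_le hmono hN (hcard (N + 1) le_rfl)
  have hB : ∀ k : ℕ, B (l + k) = superlevel (tripleConv A) ((τ₀ - l * η) - k * η) := fun k => by
    simp only [B]; push_cast; ring_nf
  rw [hB 2, Nat.cast_ofNat] at hthin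
  have hB0 : (#A : ℝ) ≤ 2 * #(B 0) := by
    simpa [B] using card_le_two_mul_card_superlevel_tripleConv hA hsym hK hdbl
  have hBl : (#(B 0) : ℝ) ≤ #(B (l + 1)) := by exact_mod_cast card_le_card (hmono (Nat.zero_le _))
  have hBu := hcard (l + 1) (by omega)
  rw [hB 1, Nat.cast_one, one_mul] at hBl hBu
  have hε : 0 < ε := pos_of_mul_pos_left ((by positivity : 0 < 16 * K ^ 2).trans_le hNε)
    (Nat.cast_nonneg N)
  refine ⟨τ₀ - l * η, by linarith [mul_nonneg (Nat.cast_nonneg l) hη], ?_, hthin.trans ?_,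
    by linarith, hBu⟩
  · have := hlow (l + 1) (by omega)
    push_cast at this
    linarith [(by positivity : (0 : ℝ) < #A ^ 2 / (4 * K))]
  · calc 2 * (4 * K ^ 2 * #A) / N = 16 * K ^ 2 / N * (#A / 2) := by ring
      _ ≤ ε * (#A / 2) := by gcongr; rwa [div_le_iff₀ (by exact_mod_cast hN)]
      _ ≤ ε * _ := by gcongr; linarith

theorem exists_multPair_of_card_mul_le {ε δ η : ℝ} {r N m : ℕ} (hK : 1 ≤ K) (hN : 0 < N)
    (hNε : 16 * K ^ 2 ≤ ε * N) (hNη : (N + 1) * η ≤ 1 / (4 * K)) (hδ : 0 ≤ δ)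
    (hδη : 2 * r * δ ≤ η) (hm : 8 * K ≤ δ ^ 2 * (m + 1))
    (hA : A.Nonempty) (hsym : A⁻¹ = A) (hdbl : (#(A * A) : ℝ) ≤ K * #A) :
    ∃ B B' : Finset G, IsMultPair (B : Set G) B' r ε (1 / (8 * K ^ (m + 2))) ∧ B ⊆ A ^ 4 ∧
      (#A : ℝ) / 2 ≤ #B := by
  have hK0 : 0 < K := by linarith
  have hη : 0 ≤ η := le_trans (by positivity) hδη
  set a : ℝ := (#A : ℝ)
  obtain ⟨τ, hτ, hτpos, hthin, hBl, hBu⟩ := exists_thin_annulus_tripleConv hA hsym hK0 hdbl hN hNε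
    (η := a ^ 2 * η) (by positivity) (by
      calc (N + 1) * (a ^ 2 * η) = a ^ 2 * ((N + 1) * η) := by ring
        _ ≤ a ^ 2 * (1 / (4 * K)) := by gcongr
        _ = a ^ 2 / (4 * K) := mul_one_div _ _)
  have hτ1 : τ ≤ tripleConv A 1 := hτ.trans
    ((div_le_self (by positivity) (by linarith)).trans (sq_card_le_tripleConv_one hsym))
  have hthick : 1 / (8 * K ^ (m + 2)) * #(superlevel (tripleConv A) (τ - a ^ 2 * η)) ≤
      #(almostPeriods (tripleConv A) (δ * a ^ 2)) := by
    refine le_trans ?_ (card_almostPeriods_tripleConv_ge hA hsym hK0 hdbl hδ hm)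
    calc _ ≤ 1 / (8 * K ^ (m + 2)) * (4 * K ^ 2 * a) := by gcongr
      _ = a / (2 * K ^ m) := by field_simp; ring
  refine ⟨_, _, isMultPair_superlevel (tripleConv_inv_apply hsym) (by positivity) ?_ hτ1 hthin
    hthick, fun x hx => ?_, hBl⟩
  · calc 2 * r * (δ * a ^ 2) = a ^ 2 * (2 * r * δ) := by ring
      _ ≤ a ^ 2 * η := by gcongr
  · exact mem_coe.mp (support_tripleConv_subset A (hτpos.trans_le (mem_superlevel.mp hx)).ne')

lemma exists_levelParameters {K ε : ℝ} (hK : 1 ≤ K) (hε : 0 < ε) (r : ℕ) :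
    ∃ (N m : ℕ) (η δ : ℝ), 0 < N ∧ 16 * K ^ 2 ≤ ε * N ∧ (N + 1) * η ≤ 1 / (4 * K) ∧ 0 ≤ δ ∧
      2 * r * δ ≤ η ∧ 8 * K ≤ δ ^ 2 * (m + 1) := by
  have hK0 : 0 < K := by linarith
  set N := ⌈16 * K ^ 2 / ε⌉₊
  set η : ℝ := 1 / (4 * K * (N + 1))
  set δ : ℝ := η / (2 * (r + 1))
  have hδ : 0 < δ := by positivity
  refine ⟨N, ⌈8 * K / δ ^ 2⌉₊, η, δ, Nat.ceil_pos.mpr (by positivity), ?_, ?_, hδ.le, ?_, ?_⟩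
  · rw [← div_le_iff₀' hε]; exact Nat.le_ceil _
  · simp only [η]; field_simp; rfl
  · have : 2 * r * δ = η * (r / (r + 1)) := by simp only [δ]; field_simp
    rw [this]
    exact mul_le_of_le_one_right (by positivity) ((div_le_one (by positivity)).mpr (by linarith))
  · rw [← div_le_iff₀' (by positivity)]
    exact (Nat.le_ceil _).trans (by linarith)

end MainArgument
end WeakFreiman

/-- Weak Freiman-type theorem (containment form): a symmetric set of small doubling
contains a large ground set of a multiplicative pair inside its fourth power. -/
theorem weak_freiman_containment :
    ∃ C₁ C₂ : ℝ, 1 ≤ C₁ ∧ 1 ≤ C₂ ∧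
      ∀ K : ℝ, 1 ≤ K → ∀ r : ℕ, ∀ ε : ℝ, 0 < ε → ε ≤ 1 →
        ∃ c > (0 : ℝ),
          ∀ (G : Type u) [Group G] [Fintype G], ∀ A : Set G,
            A.Nonempty → A⁻¹ = A → density (A * A) ≤ K * density A →
            ∃ B B' : Set G, IsMultPair B B' r ε c ∧ B ⊆ A ^ 4 ∧
              C₁⁻¹ * K ^ (-C₂) * density A ≤ density B := by
  refine ⟨2, 1, one_le_two, le_rfl, fun K hK r ε hε _ => ?_⟩
  obtain ⟨N, m, η, δ, hN, hNε, hNη, hδ, hδη, hm⟩ := WeakFreiman.exists_levelParameters hK hε r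
  refine ⟨1 / (8 * K ^ (m + 2)), by positivity, fun G _ _ A hA hsym hdbl => ?_⟩
  classical
  obtain ⟨A, rfl⟩ := A.toFinite.exists_finset_coe
  have hG : (0 : ℝ) < Fintype.card G := by exact_mod_cast Fintype.card_pos
  rw [← Finset.coe_mul, WeakFreiman.density_coe, WeakFreiman.density_coe, ← mul_div_assoc,
    div_le_div_iff_of_pos_right hG] at hdbl
  obtain ⟨B, B', hpair, hBA, hB⟩ := WeakFreiman.exists_multPair_of_card_mul_le hK hN hNε hNη hδ
    hδη hm (Finset.coe_nonempty.mp hA) (by exact_mod_cast hsym) hdbl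
  refine ⟨B, B', hpair, by rw [← Finset.coe_pow]; exact Finset.coe_subset.mpr hBA, ?_⟩
  rw [WeakFreiman.density_coe, WeakFreiman.density_coe, Real.rpow_neg_one, ← mul_div_assoc]
  refine div_le_div_of_nonneg_right (le_trans ?_ hB) hG.le
  have : K⁻¹ ≤ 1 := inv_le_one_of_one_le₀ hK
  have : (0 : ℝ) ≤ Finset.card A := Nat.cast_nonneg _
  nlinarith
end
end
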